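/- arXiv:2408.07978 — 9 statements merged into one kernel-verified Lean document; each statement's English description precedes it below -/
import Mathlib

section
/- Let p and q be probability vectors on {1,…,n}, and let u_1, u_2, u_3, … be a shared i.i.d. sequence of random variables, each uniformly distributed on [0, n]. Let a be the value j such that u_k ∈ [j−1, j−1+p_j] for the least k at which this occurs, and let b be the value j such that u_k ∈ [j−1, j−1+q_j] for the least k at which this occurs (both defined almost surely). Then Pr[a = b] = (1 − D_TV(p,q) + Σ_{i=1}^n |p_i − q_i|·min(p_i, q_i)) / (1 + D_TV(p,q)), and in particular Pr[a = b] ≥ (1 − D_TV(p,q)) / (1 + D_TV(p,q)). -/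
open MeasureTheory ProbabilityTheory

lemma vol_iUnion_Icc (n : ℕ) (w : Fin n → ℝ) (h0 : ∀ i, 0 ≤ w i) (h1 : ∀ i, w i ≤ 1) :
    volume (⋃ j : Fin n, Set.Icc ((j : ℕ) : ℝ) (((j : ℕ) : ℝ) + w j))
      = ENNReal.ofReal (∑ j, w j) := by
  have hIco : ∀ j : Fin n, volume (Set.Ico ((j : ℕ) : ℝ) (((j : ℕ) : ℝ) + w j))
      = ENNReal.ofReal (w j) := by
    intro j; rw [Real.volume_Ico]; ring_nf
  have hIcc : ∀ j : Fin n, volume (Set.Icc ((j : ℕ) : ℝ) (((j : ℕ) : ℝ) + w j))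
      = ENNReal.ofReal (w j) := by
    intro j; rw [Real.volume_Icc]; ring_nf
  have hd : Pairwise (Function.onFun Disjoint
      fun j : Fin n => Set.Ico ((j : ℕ) : ℝ) (((j : ℕ) : ℝ) + w j)) := by
    intro i j hij
    rw [Function.onFun, Set.Ico_disjoint_Ico]
    have hne : (i : ℕ) ≠ (j : ℕ) := fun h => hij (Fin.ext h)
    rcases hne.lt_or_gt with h | h
    · have : ((i : ℕ) : ℝ) + 1 ≤ ((j : ℕ) : ℝ) := by exact_mod_cast h
      exact le_trans (min_le_left _ _) (le_trans (by linarith [h1 i]) (le_max_right _ _))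
    · have : ((j : ℕ) : ℝ) + 1 ≤ ((i : ℕ) : ℝ) := by exact_mod_cast h
      exact le_trans (min_le_right _ _) (le_trans (by linarith [h1 j]) (le_max_left _ _))
  apply le_antisymm
  · calc volume (⋃ j : Fin n, Set.Icc ((j : ℕ) : ℝ) (((j : ℕ) : ℝ) + w j))
        ≤ ∑' j : Fin n, volume (Set.Icc ((j : ℕ) : ℝ) (((j : ℕ) : ℝ) + w j)) :=
          measure_iUnion_le _
      _ = ENNReal.ofReal (∑ j, w j) := by
          rw [tsum_fintype]
          simp_rw [hIcc]
          rw [← ENNReal.ofReal_sum_of_nonneg (fun j _ => h0 j)]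
  · calc ENNReal.ofReal (∑ j, w j)
        = volume (⋃ j : Fin n, Set.Ico ((j : ℕ) : ℝ) (((j : ℕ) : ℝ) + w j)) := by
          rw [measure_iUnion hd (fun j => measurableSet_Ico), tsum_fintype]
          simp_rw [hIco]
          rw [← ENNReal.ofReal_sum_of_nonneg (fun j _ => h0 j)]
      _ ≤ _ := measure_mono (Set.iUnion_mono fun j => Set.Ico_subset_Icc_self)


namespace Stmt3Aux

variable {n : ℕ}

def hits (p : Fin n → ℝ) (x : ℝ) (j : Fin n) : Prop :=
  x ∈ Set.Icc ((j : ℕ) : ℝ) (((j : ℕ) : ℝ) + p j)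

/-- event: both stop at time `k` with the same value -/
def AE (p q : Fin n → ℝ) (x : ℕ → ℝ) (k : ℕ) : Prop :=
  (∀ m < k, ∀ i, ¬ hits p (x m) i ∧ ¬ hits q (x m) i) ∧
    ∃ j, hits p (x k) j ∧ hits q (x k) j

/-- event: `p`-player stops at `k` with value `j`, `q`-player stops at `k+1+t` with value `j` -/
def BE (p q : Fin n → ℝ) (x : ℕ → ℝ) (k : ℕ) (j : Fin n) (t : ℕ) : Prop :=
  (∀ m < k, ∀ i, ¬ hits p (x m) i ∧ ¬ hits q (x m) i) ∧
    (hits p (x k) j ∧ ∀ i, ¬ hits q (x k) i) ∧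
    (∀ s < t, ∀ i, ¬ hits q (x (k + 1 + s)) i) ∧
    hits q (x (k + 1 + t)) j

def Tgt (p q : Fin n → ℝ) (x : ℕ → ℝ) : Prop :=
  ∃ j, (∃ k, hits p (x k) j ∧ ∀ m < k, ∀ i, ¬ hits p (x m) i) ∧
       (∃ k, hits q (x k) j ∧ ∀ m < k, ∀ i, ¬ hits q (x m) i)

lemma decomp (p q : Fin n → ℝ) (x : ℕ → ℝ) :
    Tgt p q x ↔ ((∃ k, AE p q x k) ∨ (∃ k j t, BE p q x k j t) ∨ ∃ k j t, BE q p x k j t) := by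
  constructor
  · rintro ⟨j, ⟨k1, h1, h1'⟩, ⟨k2, h2, h2'⟩⟩
    rcases lt_trichotomy k1 k2 with h | h | h
    · refine Or.inr (Or.inl ⟨k1, j, k2 - k1 - 1, ?_, ⟨h1, fun i => h2' k1 h i⟩, ?_, ?_⟩)
      · exact fun m hm i => ⟨h1' m hm i, h2' m (lt_trans hm h) i⟩
      · exact fun s hs i => h2' (k1 + 1 + s) (by omega) i
      · have : k1 + 1 + (k2 - k1 - 1) = k2 := by omega
        rw [this]; exact h2
    · subst h
      exact Or.inl ⟨k1, fun m hm i => ⟨h1' m hm i, h2' m hm i⟩, j, h1, h2⟩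
    · refine Or.inr (Or.inr ⟨k2, j, k1 - k2 - 1, ?_, ⟨h2, fun i => h1' k2 h i⟩, ?_, ?_⟩)
      · exact fun m hm i => ⟨h2' m hm i, h1' m (lt_trans hm h) i⟩
      · exact fun s hs i => h1' (k2 + 1 + s) (by omega) i
      · have : k2 + 1 + (k1 - k2 - 1) = k1 := by omega
        rw [this]; exact h1
  · rintro (⟨k, hpre, j, hp, hq⟩ | ⟨k, j, t, hpre, ⟨hp, hnq⟩, hmid, hq⟩ |
        ⟨k, j, t, hpre, ⟨hq, hnp⟩, hmid, hp⟩)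
    · exact ⟨j, ⟨k, hp, fun m hm i => (hpre m hm i).1⟩, ⟨k, hq, fun m hm i => (hpre m hm i).2⟩⟩
    · refine ⟨j, ⟨k, hp, fun m hm i => (hpre m hm i).1⟩, ⟨k + 1 + t, hq, fun m hm i => ?_⟩⟩
      rcases lt_trichotomy m k with h | h | h
      · exact (hpre m h i).2
      · subst h; exact hnq i
      · have he : m = k + 1 + (m - k - 1) := by omega
        rw [he]; exact hmid _ (by omega) i
    · refine ⟨j, ⟨k + 1 + t, hp, fun m hm i => ?_⟩, ⟨k, hq, fun m hm i => (hpre m hm i).1⟩⟩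
      rcases lt_trichotomy m k with h | h | h
      · exact (hpre m h i).2
      · subst h; exact hnp i
      · have he : m = k + 1 + (m - k - 1) := by omega
        rw [he]; exact hmid _ (by omega) i

/-- both players are still running before `k` and someone hits at `k` -/
def Stp (p q : Fin n → ℝ) (x : ℕ → ℝ) (k : ℕ) : Prop :=
  (∀ m < k, ∀ i, ¬ hits p (x m) i ∧ ¬ hits q (x m) i) ∧
    ∃ i, hits p (x k) i ∨ hits q (x k) i

lemma AE_stp {p q : Fin n → ℝ} {x k} (h : AE p q x k) : Stp p q x k :=
  ⟨h.1, h.2.choose, Or.inl h.2.choose_spec.1⟩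

lemma BE_stp {p q : Fin n → ℝ} {x k j t} (h : BE p q x k j t) : Stp p q x k :=
  ⟨h.1, j, Or.inl h.2.1.1⟩

lemma BE_stp' {p q : Fin n → ℝ} {x k j t} (h : BE q p x k j t) : Stp p q x k :=
  ⟨fun m hm i => ⟨(h.1 m hm i).2, (h.1 m hm i).1⟩, j, Or.inr h.2.1.1⟩

lemma stp_eq {p q : Fin n → ℝ} {x k k'} (h : Stp p q x k) (h' : Stp p q x k') : k = k' := by
  by_contra hne
  rcases Nat.lt_or_ge k k' with hlt | hge
  · obtain ⟨i, hi⟩ := h.2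
    exact hi.elim (fun hh => (h'.1 k hlt i).1 hh) fun hh => (h'.1 k hlt i).2 hh
  · obtain ⟨i, hi⟩ := h'.2
    exact hi.elim (fun hh => (h.1 k' (by omega) i).1 hh) fun hh => (h.1 k' (by omega) i).2 hh

lemma hits_unique {p q : Fin n → ℝ} {x : ℝ} {j j' : Fin n}
    (hq0 : ∀ i, 0 ≤ q i) (hple : ∀ i, p i ≤ 1)
    (h : hits p x j) (h' : hits p x j') (hnq : ∀ i, ¬ hits q x i) : j = j' := by
  by_contra hne
  have key : ∀ a b : Fin n, (a : ℕ) < (b : ℕ) → hits p x a → hits p x b → False := by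
    intro a b hab ⟨ha1, ha2⟩ ⟨hb1, hb2⟩
    have hcast : ((a : ℕ) : ℝ) + 1 ≤ ((b : ℕ) : ℝ) := by exact_mod_cast hab
    have hx : x = ((b : ℕ) : ℝ) := le_antisymm (by linarith [hple a]) hb1
    exact hnq b ⟨le_of_eq hx.symm, by rw [hx]; linarith [hq0 b]⟩
  rcases Ne.lt_or_gt (fun hh : (j : ℕ) = (j' : ℕ) => hne (Fin.ext hh)) with hlt | hlt
  · exact key j j' hlt h h'
  · exact key j' j hlt h' h

lemma BE_eq {p q : Fin n → ℝ} {x k j t j' t'}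
    (hq0 : ∀ i, 0 ≤ q i) (hple : ∀ i, p i ≤ 1)
    (h : BE p q x k j t) (h' : BE p q x k j' t') : j = j' ∧ t = t' := by
  have hj : j = j' := hits_unique hq0 hple h.2.1.1 h'.2.1.1 h.2.1.2
  refine ⟨hj, ?_⟩
  by_contra hne
  rcases Nat.lt_or_ge t t' with hlt | hge
  · exact h'.2.2.1 t hlt j h.2.2.2
  · exact h.2.2.1 t' (by omega) j' h'.2.2.2

lemma AE_BE {p q : Fin n → ℝ} {x k j t} (h : AE p q x k) (h' : BE p q x k j t) : False := by
  obtain ⟨i, _, hiq⟩ := h.2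
  exact h'.2.1.2 i hiq

lemma AE_BE' {p q : Fin n → ℝ} {x k j t} (h : AE p q x k) (h' : BE q p x k j t) : False :=
  h'.2.1.2 h.2.choose h.2.choose_spec.1

lemma BE_BE' {p q : Fin n → ℝ} {x k j t j' t'} (h : BE p q x k j t) (h' : BE q p x k j' t') :
    False := h.2.1.2 j' h'.2.1.1



def pI (p : Fin n → ℝ) (j : Fin n) : Set ℝ :=
  Set.Icc ((j : ℕ) : ℝ) (((j : ℕ) : ℝ) + p j)

def UP (p : Fin n → ℝ) : Set ℝ := ⋃ j, pI p j

def Wb (p q : Fin n → ℝ) : Set ℝ := (UP p ∪ UP q)ᶜ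

def Smin (p q : Fin n → ℝ) : Set ℝ := ⋃ j, pI p j ∩ pI q j

def Dd (p q : Fin n → ℝ) (j : Fin n) : Set ℝ := pI p j ∩ (UP q)ᶜ

lemma mem_pI {p : Fin n → ℝ} {x j} : x ∈ pI p j ↔ hits p x j := Iff.rfl

lemma mem_UPc {q : Fin n → ℝ} {x} : x ∈ (UP q)ᶜ ↔ ∀ i, ¬ hits q x i := by
  simp [UP, pI, hits, Set.mem_iUnion]

lemma mem_Wb {p q : Fin n → ℝ} {x} : x ∈ Wb p q ↔ ∀ i, ¬ hits p x i ∧ ¬ hits q x i := by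
  simp only [Wb, Set.mem_compl_iff, Set.mem_union, UP, Set.mem_iUnion, not_or, not_exists]
  constructor
  · exact fun ⟨h1, h2⟩ i => ⟨h1 i, h2 i⟩
  · exact fun h => ⟨fun i => (h i).1, fun i => (h i).2⟩

lemma mem_Smin {p q : Fin n → ℝ} {x} : x ∈ Smin p q ↔ ∃ j, hits p x j ∧ hits q x j := by
  simp [Smin, Set.mem_iUnion, pI, hits]

lemma mem_Dd {p q : Fin n → ℝ} {x j} : x ∈ Dd p q j ↔ hits p x j ∧ ∀ i, ¬ hits q x i := by
  simp only [Dd, Set.mem_inter_iff, mem_pI, mem_UPc]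

lemma meas_pI (p : Fin n → ℝ) (j) : MeasurableSet (pI p j) := measurableSet_Icc
lemma meas_UP (p : Fin n → ℝ) : MeasurableSet (UP p) :=
  MeasurableSet.iUnion fun j => meas_pI p j
lemma meas_Wb (p q : Fin n → ℝ) : MeasurableSet (Wb p q) :=
  ((meas_UP p).union (meas_UP q)).compl
lemma meas_Smin (p q : Fin n → ℝ) : MeasurableSet (Smin p q) :=
  MeasurableSet.iUnion fun j => (meas_pI p j).inter (meas_pI q j)
lemma meas_Dd (p q : Fin n → ℝ) (j) : MeasurableSet (Dd p q j) :=
  (meas_pI p j).inter (meas_UP q).compl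

variable {Ω : Type*} [MeasurableSpace Ω]

lemma AE_set (p q : Fin n → ℝ) (u : ℕ → Ω → ℝ) (k : ℕ) :
    {ω : Ω | AE p q (fun m => u m ω) k} =
      ⋂ m ∈ Finset.range (k + 1), u m ⁻¹' (if m < k then Wb p q else Smin p q) := by
  ext ω
  simp only [Set.mem_setOf_eq, AE, Set.mem_iInter, Finset.mem_range, Set.mem_preimage]
  constructor
  · rintro ⟨hpre, j, hj⟩ m hm
    by_cases h : m < k
    · rw [if_pos h, mem_Wb]; exact hpre m h
    · have : m = k := by omega
      subst this; rw [if_neg h, mem_Smin]; exact ⟨j, hj⟩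
  · intro h
    refine ⟨fun m hm i => ?_, ?_⟩
    · have := h m (by omega); rw [if_pos hm, mem_Wb] at this; exact this i
    · have := h k (by omega); rw [if_neg (lt_irrefl k), mem_Smin] at this; exact this

lemma BE_set (p q : Fin n → ℝ) (u : ℕ → Ω → ℝ) (k : ℕ) (j : Fin n) (t : ℕ) :
    {ω : Ω | BE p q (fun m => u m ω) k j t} =
      ⋂ m ∈ Finset.range (k + 1 + t + 1), u m ⁻¹'
        (if m < k then Wb p q else if m = k then Dd p q j
          else if m < k + 1 + t then (UP q)ᶜ else pI q j) := by
  ext ω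
  simp only [Set.mem_setOf_eq, BE, Set.mem_iInter, Finset.mem_range, Set.mem_preimage]
  constructor
  · rintro ⟨hpre, hk, hmid, hlast⟩ m hm
    by_cases h1 : m < k
    · rw [if_pos h1, mem_Wb]; exact hpre m h1
    · by_cases h2 : m = k
      · subst h2; rw [if_neg h1, if_pos rfl, mem_Dd]; exact hk
      · by_cases h3 : m < k + 1 + t
        · rw [if_neg h1, if_neg h2, if_pos h3, mem_UPc]
          have he : m = k + 1 + (m - k - 1) := by omega
          rw [he]; exact hmid _ (by omega)
        · have : m = k + 1 + t := by omega
          subst this; rw [if_neg h1, if_neg h2, if_neg h3, mem_pI]; exact hlast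
  · intro h
    refine ⟨fun m hm i => ?_, ?_, fun s hs i => ?_, ?_⟩
    · have := h m (by omega); rw [if_pos hm, mem_Wb] at this; exact this i
    · have := h k (by omega)
      rw [if_neg (lt_irrefl k), if_pos rfl, mem_Dd] at this; exact this
    · have := h (k + 1 + s) (by omega)
      rw [if_neg (by omega), if_neg (by omega), if_pos (by omega), mem_UPc] at this
      exact this i
    · have := h (k + 1 + t) (by omega)
      rw [if_neg (by omega), if_neg (by omega), if_neg (by omega), mem_pI] at this
      exact this

lemma prod_ifA {M : Type*} [CommMonoid M] (a b : M) (k : ℕ) :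
    (∏ m ∈ Finset.range (k + 1), (if m < k then a else b)) = a ^ k * b := by
  rw [Finset.prod_range_succ, if_neg (lt_irrefl k)]
  congr 1
  rw [Finset.prod_congr rfl (fun m hm => if_pos (Finset.mem_range.1 hm)), Finset.prod_const,
    Finset.card_range]

lemma prod_ifB {M : Type*} [CommMonoid M] (a b c d : M) (k t : ℕ) :
    (∏ m ∈ Finset.range (k + 1 + t + 1),
      (if m < k then a else if m = k then b else if m < k + 1 + t then c else d))
      = a ^ k * b * c ^ t * d := by
  rw [Finset.prod_range_succ, if_neg (by omega), if_neg (by omega), if_neg (by omega)]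
  congr 1
  rw [Finset.prod_range_add]
  congr 1
  · rw [Finset.prod_range_succ, if_neg (lt_irrefl k), if_pos rfl]
    congr 1
    rw [Finset.prod_congr rfl (fun m hm => if_pos (Finset.mem_range.1 hm)), Finset.prod_const,
      Finset.card_range]
  · rw [Finset.prod_congr rfl (fun m hm => ?_), Finset.prod_const, Finset.card_range]
    rw [if_neg (by omega), if_neg (by omega),
      if_pos (by have := Finset.mem_range.1 hm; omega)]

lemma marg {Ω : Type*} [MeasurableSpace Ω] {μ : Measure Ω} {f : Ω → ℝ} (hf : Measurable f)
    {N : ℝ} (hu : Measure.map f μ = (ENNReal.ofReal N)⁻¹ • volume.restrict (Set.Icc (0 : ℝ) N))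
    {S : Set ℝ} (hS : MeasurableSet S) :
    μ (f ⁻¹' S) = (ENNReal.ofReal N)⁻¹ * volume (S ∩ Set.Icc (0 : ℝ) N) := by
  rw [← Measure.map_apply hf hS, hu, Measure.smul_apply, Measure.restrict_apply hS, smul_eq_mul]

lemma vol_pI (p : Fin n → ℝ) (h0 : 0 ≤ p j) : volume (pI p j) = ENNReal.ofReal (p j) := by
  rw [pI, Real.volume_Icc, show ((j : ℕ) : ℝ) + p j - (j : ℕ) = p j from by ring]

lemma UP_subset {p : Fin n → ℝ} (hp1 : ∀ i, p i ≤ 1) : UP p ⊆ Set.Icc (0 : ℝ) n := by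
  rintro x hx
  obtain ⟨j, hj⟩ := Set.mem_iUnion.1 hx
  have hjn : ((j : ℕ) : ℝ) + 1 ≤ (n : ℝ) := by exact_mod_cast j.isLt
  exact ⟨le_trans (Nat.cast_nonneg _) hj.1, by have := hj.2; have := hp1 j; linarith⟩

lemma vol_compl_inter {U : Set ℝ} (hUm : MeasurableSet U) {N v : ℝ}
    (hU : U ⊆ Set.Icc 0 N) (hv : volume U = ENNReal.ofReal v) (hv0 : 0 ≤ v) :
    volume (Uᶜ ∩ Set.Icc 0 N) = ENNReal.ofReal (N - v) := by
  rw [Set.inter_comm, ← Set.diff_eq,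
    measure_diff hU hUm.nullMeasurableSet (by rw [hv]; exact ENNReal.ofReal_ne_top), hv,
    Real.volume_Icc, sub_zero, ← ENNReal.ofReal_sub _ hv0]

lemma UP_union_eq (p q : Fin n → ℝ) :
    UP p ∪ UP q = ⋃ j : Fin n, Set.Icc ((j : ℕ) : ℝ) (((j : ℕ) : ℝ) + max (p j) (q j)) := by
  rw [UP, UP, ← Set.iUnion_union_distrib]
  refine Set.iUnion_congr fun j => ?_
  rcases le_total (p j) (q j) with h | h
  · rw [max_eq_right h, pI, pI]
    exact Set.union_eq_self_of_subset_left (Set.Icc_subset_Icc_right (by linarith))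
  · rw [max_eq_left h, pI, pI]
    exact Set.union_eq_self_of_subset_right (Set.Icc_subset_Icc_right (by linarith))

lemma Smin_eq (p q : Fin n → ℝ) :
    Smin p q = ⋃ j : Fin n, Set.Icc ((j : ℕ) : ℝ) (((j : ℕ) : ℝ) + min (p j) (q j)) := by
  refine Set.iUnion_congr fun j => ?_
  rw [pI, pI, Set.Icc_inter_Icc, sup_idem]
  rw [min_add_add_left]

lemma vol_UP_union (p q : Fin n → ℝ) (hp0 : ∀ i, 0 ≤ p i) (hq0 : ∀ i, 0 ≤ q i)
    (hp1 : ∀ i, p i ≤ 1) (hq1 : ∀ i, q i ≤ 1) :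
    volume (UP p ∪ UP q) = ENNReal.ofReal (∑ j, max (p j) (q j)) := by
  rw [UP_union_eq]
  exact vol_iUnion_Icc n _ (fun i => le_trans (hp0 i) (le_max_left _ _))
    (fun i => max_le (hp1 i) (hq1 i))

lemma vol_Smin (p q : Fin n → ℝ) (hp0 : ∀ i, 0 ≤ p i) (hq0 : ∀ i, 0 ≤ q i)
    (hp1 : ∀ i, p i ≤ 1) :
    volume (Smin p q) = ENNReal.ofReal (∑ j, min (p j) (q j)) := by
  rw [Smin_eq]
  exact vol_iUnion_Icc n _ (fun i => le_min (hp0 i) (hq0 i))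
    (fun i => le_trans (min_le_left _ _) (hp1 i))

lemma vol_UP (p : Fin n → ℝ) (hp0 : ∀ i, 0 ≤ p i) (hp1 : ∀ i, p i ≤ 1) :
    volume (UP p) = ENNReal.ofReal (∑ j, p j) := by
  rw [UP]
  exact vol_iUnion_Icc n _ hp0 hp1

lemma vol_Dd (p q : Fin n → ℝ) (j : Fin n) (hp0 : ∀ i, 0 ≤ p i) (hq0 : ∀ i, 0 ≤ q i)
    (hp1 : ∀ i, p i ≤ 1) (hq1 : ∀ i, q i ≤ 1) :
    volume (Dd p q j) = ENNReal.ofReal (p j - min (p j) (q j)) := by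
  rcases le_total (p j) (q j) with h | h
  · have hsub : pI p j ⊆ UP q := fun x hx =>
      Set.mem_iUnion.2 ⟨j, hx.1, le_trans hx.2 (by linarith)⟩
    have he : Dd p q j = ∅ := by
      rw [Dd, ← Set.diff_eq]; exact Set.diff_eq_empty.2 hsub
    rw [he, min_eq_left h]; simp
  · rw [min_eq_right h]
    have hup : Dd p q j ⊆ Set.Ioc (((j : ℕ) : ℝ) + q j) (((j : ℕ) : ℝ) + p j) := by
      rintro x ⟨hx1, hx2⟩
      have hj := mem_UPc.1 hx2 j
      rw [hits] at hj
      simp only [Set.mem_Icc, not_and, not_le] at hj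
      exact ⟨hj hx1.1, hx1.2⟩
    have hlo : Set.Ioo (((j : ℕ) : ℝ) + q j) (((j : ℕ) : ℝ) + p j) ⊆ Dd p q j := by
      intro x hx
      refine ⟨⟨by linarith [hq0 j, hx.1], le_of_lt hx.2⟩, mem_UPc.2 fun i => ?_⟩
      rintro ⟨h1, h2⟩
      rcases lt_trichotomy (i : ℕ) (j : ℕ) with hij | hij | hij
      · have hc : ((i : ℕ) : ℝ) + 1 ≤ ((j : ℕ) : ℝ) := by exact_mod_cast hij
        have := hq1 i
        have := hq0 j
        have := hx.1
        linarith
      · have : i = j := Fin.ext hij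
        subst this
        exact absurd h2 (by linarith [hx.1])
      · have hc : ((j : ℕ) : ℝ) + 1 ≤ ((i : ℕ) : ℝ) := by exact_mod_cast hij
        have := hp1 j
        have := hx.2
        linarith
    have e1 : volume (Set.Ioc (((j : ℕ) : ℝ) + q j) (((j : ℕ) : ℝ) + p j))
        = ENNReal.ofReal (p j - q j) := by
      rw [Real.volume_Ioc]
      congr 1
      ring
    have e2 : volume (Set.Ioo (((j : ℕ) : ℝ) + q j) (((j : ℕ) : ℝ) + p j))
        = ENNReal.ofReal (p j - q j) := by
      rw [Real.volume_Ioo]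
      congr 1
      ring
    refine le_antisymm ?_ ?_
    · exact le_trans (measure_mono hup) (le_of_eq e1)
    · exact le_trans (le_of_eq e2.symm) (measure_mono hlo)

end Stmt3Aux

open Stmt3Aux

/-- Weighted MinHash coupling: Alice and Bob share i.i.d. uniforms on `[0, n]`;
Alice outputs `j` the first time a point lands in `[j, j + p j]`, Bob the first time
a point lands in `[j, j + q j]`.  Then
`Pr[a = b] = (1 - D_TV(p,q) + ∑ i, |p i - q i| * min (p i) (q i)) / (1 + D_TV(p,q))`,
and in particular `Pr[a = b] ≥ (1 - D_TV(p,q)) / (1 + D_TV(p,q))`. -/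
theorem stmt_3 (n : ℕ) (hn : 0 < n) (p q : Fin n → ℝ)
    (hp0 : ∀ i, 0 ≤ p i) (hp1 : ∑ i, p i = 1)
    (hq0 : ∀ i, 0 ≤ q i) (hq1 : ∑ i, q i = 1)
    {Ω : Type*} [MeasurableSpace Ω] (μ : Measure Ω) [IsProbabilityMeasure μ]
    (u : ℕ → Ω → ℝ) (hmeas : ∀ k, Measurable (u k))
    (hindep : iIndepFun u μ)
    (hunif : ∀ k, Measure.map (u k) μ =
      (ENNReal.ofReal n)⁻¹ • volume.restrict (Set.Icc (0 : ℝ) n))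
    (D : ℝ) (hD : D = (1 / 2) * ∑ i, |p i - q i|) :
    μ {ω | ∃ j : Fin n,
        (∃ k, u k ω ∈ Set.Icc (((j : ℕ) : ℝ)) (((j : ℕ) : ℝ) + p j) ∧
          ∀ m < k, ∀ i : Fin n,
            u m ω ∉ Set.Icc (((i : ℕ) : ℝ)) (((i : ℕ) : ℝ) + p i)) ∧
        (∃ k, u k ω ∈ Set.Icc (((j : ℕ) : ℝ)) (((j : ℕ) : ℝ) + q j) ∧
          ∀ m < k, ∀ i : Fin n,
            u m ω ∉ Set.Icc (((i : ℕ) : ℝ)) (((i : ℕ) : ℝ) + q i))}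
      = ENNReal.ofReal
          ((1 - D + ∑ i, |p i - q i| * min (p i) (q i)) / (1 + D)) ∧
    ENNReal.ofReal ((1 - D) / (1 + D)) ≤
      μ {ω | ∃ j : Fin n,
        (∃ k, u k ω ∈ Set.Icc (((j : ℕ) : ℝ)) (((j : ℕ) : ℝ) + p j) ∧
          ∀ m < k, ∀ i : Fin n,
            u m ω ∉ Set.Icc (((i : ℕ) : ℝ)) (((i : ℕ) : ℝ) + p i)) ∧
        (∃ k, u k ω ∈ Set.Icc (((j : ℕ) : ℝ)) (((j : ℕ) : ℝ) + q j) ∧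
          ∀ m < k, ∀ i : Fin n,
            u m ω ∉ Set.Icc (((i : ℕ) : ℝ)) (((i : ℕ) : ℝ) + q i))} := by
  classical
  have hn' : (0 : ℝ) < n := by exact_mod_cast hn
  have hple : ∀ i, p i ≤ 1 := fun i => hp1 ▸ Finset.single_le_sum
    (fun j _ => hp0 j) (Finset.mem_univ i)
  have hqle : ∀ i, q i ≤ 1 := fun i => hq1 ▸ Finset.single_le_sum
    (fun j _ => hq0 j) (Finset.mem_univ i)
  have hD0 : 0 ≤ D := by
    rw [hD]
    have : 0 ≤ ∑ i, |p i - q i| := Finset.sum_nonneg fun i _ => abs_nonneg _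
    linarith
  have e1 : (∑ j, max (p j) (q j)) + ∑ j, min (p j) (q j) = 2 := by
    have h1 : ∑ j, (max (p j) (q j) + min (p j) (q j)) = ∑ j, (p j + q j) :=
      Finset.sum_congr rfl fun j _ => max_add_min _ _
    rw [← Finset.sum_add_distrib, h1, Finset.sum_add_distrib, hp1, hq1]; norm_num
  have e2 : (∑ j, max (p j) (q j)) - ∑ j, min (p j) (q j) = 2 * D := by
    have h1 : ∑ j, (max (p j) (q j) - min (p j) (q j)) = ∑ j, |p j - q j| :=
      Finset.sum_congr rfl fun j _ => (max_sub_min_eq_abs _ _).trans (abs_sub_comm _ _)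
    rw [← Finset.sum_sub_distrib, h1, hD]; ring
  have hsum_max : ∑ j, max (p j) (q j) = 1 + D := by linarith
  have hsum_min : ∑ j, min (p j) (q j) = 1 - D := by linarith
  have hD1 : D ≤ 1 := by
    have : 0 ≤ ∑ j, min (p j) (q j) :=
      Finset.sum_nonneg fun j _ => le_min (hp0 j) (hq0 j)
    linarith
  have hDn : 1 + D ≤ n := by
    have h1 : ∑ j, max (p j) (q j) ≤ ∑ _j : Fin n, (1 : ℝ) :=
      Finset.sum_le_sum fun j _ => max_le (hple j) (hqle j)
    have h2 : ∑ _j : Fin n, (1 : ℝ) = n := by simp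
    linarith
  have h1D : (0 : ℝ) < 1 + D := by linarith
  have conv : ∀ v : ℝ, (ENNReal.ofReal (n : ℝ))⁻¹ * ENNReal.ofReal v
      = ENNReal.ofReal (v / n) := by
    intro v
    rw [ENNReal.ofReal_div_of_pos hn', ENNReal.div_eq_inv_mul]
  -- marginal probabilities
  have hW : ∀ m, μ (u m ⁻¹' Wb p q) = ENNReal.ofReal ((n - (1 + D)) / n) := by
    intro m
    rw [marg (hmeas m) (hunif m) (meas_Wb p q), Wb,
      vol_compl_inter ((meas_UP p).union (meas_UP q))
        (Set.union_subset (UP_subset hple) (UP_subset hqle))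
        (by rw [vol_UP_union p q hp0 hq0 hple hqle, hsum_max]) (by linarith), conv]
  have hSmin_sub : Smin p q ⊆ Set.Icc (0 : ℝ) n :=
    fun x hx => UP_subset hple ((Set.iUnion_mono fun j => Set.inter_subset_left) hx)
  have hSm : ∀ m, μ (u m ⁻¹' Smin p q) = ENNReal.ofReal ((1 - D) / n) := by
    intro m
    rw [marg (hmeas m) (hunif m) (meas_Smin p q), Set.inter_eq_self_of_subset_left hSmin_sub,
      vol_Smin p q hp0 hq0 hple, hsum_min, conv]
  have hUqc : ∀ m, μ (u m ⁻¹' (UP q)ᶜ) = ENNReal.ofReal ((n - 1) / n) := by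
    intro m
    rw [marg (hmeas m) (hunif m) (meas_UP q).compl,
      vol_compl_inter (meas_UP q) (UP_subset hqle)
        (by rw [vol_UP q hq0 hqle, hq1]) (by norm_num), conv]
  have hUpc : ∀ m, μ (u m ⁻¹' (UP p)ᶜ) = ENNReal.ofReal ((n - 1) / n) := by
    intro m
    rw [marg (hmeas m) (hunif m) (meas_UP p).compl,
      vol_compl_inter (meas_UP p) (UP_subset hple)
        (by rw [vol_UP p hp0 hple, hp1]) (by norm_num), conv]
  have hDdpq : ∀ m (j : Fin n), μ (u m ⁻¹' Dd p q j)
      = ENNReal.ofReal ((p j - min (p j) (q j)) / n) := by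
    intro m j
    rw [marg (hmeas m) (hunif m) (meas_Dd p q j),
      Set.inter_eq_self_of_subset_left
        (fun x hx => UP_subset hple (Set.subset_iUnion (pI p) j hx.1)),
      vol_Dd p q j hp0 hq0 hple hqle, conv]
  have hDdqp : ∀ m (j : Fin n), μ (u m ⁻¹' Dd q p j)
      = ENNReal.ofReal ((q j - min (q j) (p j)) / n) := by
    intro m j
    rw [marg (hmeas m) (hunif m) (meas_Dd q p j),
      Set.inter_eq_self_of_subset_left
        (fun x hx => UP_subset hqle (Set.subset_iUnion (pI q) j hx.1)),
      vol_Dd q p j hq0 hp0 hqle hple, conv]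
  have hpIq : ∀ m (j : Fin n), μ (u m ⁻¹' pI q j) = ENNReal.ofReal (q j / n) := by
    intro m j
    rw [marg (hmeas m) (hunif m) (meas_pI q j),
      Set.inter_eq_self_of_subset_left
        (fun x hx => UP_subset hqle (Set.subset_iUnion (pI q) j hx)),
      vol_pI q (hq0 j), conv]
  have hpIp : ∀ m (j : Fin n), μ (u m ⁻¹' pI p j) = ENNReal.ofReal (p j / n) := by
    intro m j
    rw [marg (hmeas m) (hunif m) (meas_pI p j),
      Set.inter_eq_self_of_subset_left
        (fun x hx => UP_subset hple (Set.subset_iUnion (pI p) j hx)),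
      vol_pI p (hp0 j), conv]
  -- event measures
  have hprod : ∀ (N : ℕ) (S : ℕ → Set ℝ), (∀ m, MeasurableSet (S m)) →
      μ (⋂ m ∈ Finset.range N, u m ⁻¹' S m) = ∏ m ∈ Finset.range N, μ (u m ⁻¹' S m) :=
    fun N S hS => hindep.meas_biInter fun i _ => ⟨S i, hS i, rfl⟩
  have hmuA : ∀ k, μ {ω | AE p q (fun m => u m ω) k}
      = ENNReal.ofReal ((n - (1 + D)) / n) ^ k * ENNReal.ofReal ((1 - D) / n) := by
    intro k
    rw [AE_set p q u k, hprod _ _ (fun m => by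
      split_ifs
      · exact meas_Wb p q
      · exact meas_Smin p q),
      ← prod_ifA (ENNReal.ofReal ((n - (1 + D)) / n)) (ENNReal.ofReal ((1 - D) / n)) k]
    refine Finset.prod_congr rfl fun m _ => ?_
    split_ifs with h
    · exact hW m
    · exact hSm m
  have hmuB : ∀ (k : ℕ) (j : Fin n) (t : ℕ), μ {ω | BE p q (fun m => u m ω) k j t}
      = ENNReal.ofReal ((n - (1 + D)) / n) ^ k * ENNReal.ofReal ((p j - min (p j) (q j)) / n)
        * ENNReal.ofReal ((n - 1) / n) ^ t * ENNReal.ofReal (q j / n) := by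
    intro k j t
    rw [BE_set p q u k j t, hprod _ _ (fun m => by
      split_ifs
      · exact meas_Wb p q
      · exact meas_Dd p q j
      · exact (meas_UP q).compl
      · exact meas_pI q j),
      ← prod_ifB (ENNReal.ofReal ((n - (1 + D)) / n))
        (ENNReal.ofReal ((p j - min (p j) (q j)) / n))
        (ENNReal.ofReal ((n - 1) / n)) (ENNReal.ofReal (q j / n)) k t]
    refine Finset.prod_congr rfl fun m _ => ?_
    split_ifs with h1 h2 h3
    · exact hW m
    · exact hDdpq m j
    · exact hUqc m
    · exact hpIq m j
  have hWb_symm : Wb q p = Wb p q := by rw [Wb, Wb, Set.union_comm]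
  have hmuB' : ∀ (k : ℕ) (j : Fin n) (t : ℕ), μ {ω | BE q p (fun m => u m ω) k j t}
      = ENNReal.ofReal ((n - (1 + D)) / n) ^ k * ENNReal.ofReal ((q j - min (q j) (p j)) / n)
        * ENNReal.ofReal ((n - 1) / n) ^ t * ENNReal.ofReal (p j / n) := by
    intro k j t
    rw [BE_set q p u k j t, hprod _ _ (fun m => by
      split_ifs
      · exact meas_Wb q p
      · exact meas_Dd q p j
      · exact (meas_UP p).compl
      · exact meas_pI p j),
      ← prod_ifB (ENNReal.ofReal ((n - (1 + D)) / n))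
        (ENNReal.ofReal ((q j - min (q j) (p j)) / n))
        (ENNReal.ofReal ((n - 1) / n)) (ENNReal.ofReal (p j / n)) k t]
    refine Finset.prod_congr rfl fun m _ => ?_
    split_ifs with h1 h2 h3
    · rw [hWb_symm]; exact hW m
    · exact hDdqp m j
    · exact hUpc m
    · exact hpIp m j
  -- measurability of the events
  have hmA : ∀ k, MeasurableSet {ω | AE p q (fun m => u m ω) k} := by
    intro k
    rw [AE_set p q u k]
    exact Finset.measurableSet_biInter _ fun m _ => hmeas m (by
      split_ifs
      · exact meas_Wb p q
      · exact meas_Smin p q)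
  have hmB : ∀ (k : ℕ) (j : Fin n) (t : ℕ),
      MeasurableSet {ω | BE p q (fun m => u m ω) k j t} := by
    intro k j t
    rw [BE_set p q u k j t]
    exact Finset.measurableSet_biInter _ fun m _ => hmeas m (by
      split_ifs
      · exact meas_Wb p q
      · exact meas_Dd p q j
      · exact (meas_UP q).compl
      · exact meas_pI q j)
  have hmB' : ∀ (k : ℕ) (j : Fin n) (t : ℕ),
      MeasurableSet {ω | BE q p (fun m => u m ω) k j t} := by
    intro k j t
    rw [BE_set q p u k j t]
    exact Finset.measurableSet_biInter _ fun m _ => hmeas m (by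
      split_ifs
      · exact meas_Wb q p
      · exact meas_Dd q p j
      · exact (meas_UP p).compl
      · exact meas_pI p j)
  -- disjointness
  have hdA : Pairwise (Function.onFun Disjoint
      fun k => {ω : Ω | AE p q (fun m => u m ω) k}) := by
    intro k k' hkk
    rw [Function.onFun, Set.disjoint_left]
    intro ω h1 h2
    exact hkk (stp_eq (AE_stp h1) (AE_stp h2))
  have hdB : Pairwise (Function.onFun Disjoint
      fun z : ℕ × Fin n × ℕ => {ω : Ω | BE p q (fun m => u m ω) z.1 z.2.1 z.2.2}) := by
    rintro ⟨k, j, t⟩ ⟨k', j', t'⟩ hne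
    rw [Function.onFun, Set.disjoint_left]
    intro ω h1 h2
    have hk : k = k' := stp_eq (BE_stp h1) (BE_stp h2)
    subst hk
    obtain ⟨hj, ht⟩ := BE_eq hq0 hple h1 h2
    obtain rfl : j = j' := hj
    obtain rfl : t = t' := ht
    exact hne rfl
  have hdB' : Pairwise (Function.onFun Disjoint
      fun z : ℕ × Fin n × ℕ => {ω : Ω | BE q p (fun m => u m ω) z.1 z.2.1 z.2.2}) := by
    rintro ⟨k, j, t⟩ ⟨k', j', t'⟩ hne
    rw [Function.onFun, Set.disjoint_left]
    intro ω h1 h2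
    have hk : k = k' := stp_eq (BE_stp h1) (BE_stp h2)
    subst hk
    obtain ⟨hj, ht⟩ := BE_eq hp0 hqle h1 h2
    obtain rfl : j = j' := hj
    obtain rfl : t = t' := ht
    exact hne rfl
  have hdBB' : Disjoint (⋃ z : ℕ × Fin n × ℕ, {ω : Ω | BE p q (fun m => u m ω) z.1 z.2.1 z.2.2})
      (⋃ z : ℕ × Fin n × ℕ, {ω : Ω | BE q p (fun m => u m ω) z.1 z.2.1 z.2.2}) := by
    rw [Set.disjoint_left]
    intro ω h1 h2
    simp only [Set.mem_iUnion] at h1 h2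
    obtain ⟨⟨k, j, t⟩, h1⟩ := h1
    obtain ⟨⟨k', j', t'⟩, h2⟩ := h2
    have hk : k = k' := stp_eq (BE_stp h1) (BE_stp' h2)
    subst hk
    exact BE_BE' h1 h2
  have hdAB : Disjoint (⋃ k, {ω : Ω | AE p q (fun m => u m ω) k})
      ((⋃ z : ℕ × Fin n × ℕ, {ω : Ω | BE p q (fun m => u m ω) z.1 z.2.1 z.2.2})
        ∪ ⋃ z : ℕ × Fin n × ℕ, {ω : Ω | BE q p (fun m => u m ω) z.1 z.2.1 z.2.2}) := by
    rw [Set.disjoint_left]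
    intro ω h1 h2
    simp only [Set.mem_iUnion, Set.mem_union] at h1 h2
    obtain ⟨k, h1⟩ := h1
    rcases h2 with ⟨⟨k', j, t⟩, h2⟩ | ⟨⟨k', j, t⟩, h2⟩
    · have hk : k = k' := stp_eq (AE_stp h1) (BE_stp h2)
      subst hk
      exact AE_BE h1 h2
    · have hk : k = k' := stp_eq (AE_stp h1) (BE_stp' h2)
      subst hk
      exact AE_BE' h1 h2
  -- the decomposition of the target event
  have hT : {ω : Ω | ∃ j : Fin n,
        (∃ k, u k ω ∈ Set.Icc (((j : ℕ) : ℝ)) (((j : ℕ) : ℝ) + p j) ∧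
          ∀ m < k, ∀ i : Fin n,
            u m ω ∉ Set.Icc (((i : ℕ) : ℝ)) (((i : ℕ) : ℝ) + p i)) ∧
        (∃ k, u k ω ∈ Set.Icc (((j : ℕ) : ℝ)) (((j : ℕ) : ℝ) + q j) ∧
          ∀ m < k, ∀ i : Fin n,
            u m ω ∉ Set.Icc (((i : ℕ) : ℝ)) (((i : ℕ) : ℝ) + q i))}
      = (⋃ k, {ω : Ω | AE p q (fun m => u m ω) k})
        ∪ ((⋃ z : ℕ × Fin n × ℕ, {ω : Ω | BE p q (fun m => u m ω) z.1 z.2.1 z.2.2})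
          ∪ ⋃ z : ℕ × Fin n × ℕ, {ω : Ω | BE q p (fun m => u m ω) z.1 z.2.1 z.2.2}) := by
    ext ω
    simp only [Set.mem_setOf_eq, Set.mem_union, Set.mem_iUnion, Prod.exists]
    constructor
    · intro h
      rcases (decomp p q (fun m => u m ω)).1 h with h | h | h
      · exact Or.inl h
      · obtain ⟨k, j, t, hb⟩ := h
        exact Or.inr (Or.inl ⟨k, j, t, hb⟩)
      · obtain ⟨k, j, t, hb⟩ := h
        exact Or.inr (Or.inr ⟨k, j, t, hb⟩)
    · intro h
      refine (decomp p q (fun m => u m ω)).2 ?_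
      rcases h with h | ⟨k, j, t, hb⟩ | ⟨k, j, t, hb⟩
      · exact Or.inl h
      · exact Or.inr (Or.inl ⟨k, j, t, hb⟩)
      · exact Or.inr (Or.inr ⟨k, j, t, hb⟩)
  -- geometric series
  have G1 : ∑' k : ℕ, ENNReal.ofReal ((n - (1 + D)) / n) ^ k
      = ENNReal.ofReal (n / (1 + D)) := by
    rw [ENNReal.tsum_geometric]
    have ha : (0 : ℝ) ≤ (n - (1 + D)) / n := div_nonneg (by linarith) hn'.le
    have h1 : (1 : ENNReal) - ENNReal.ofReal ((n - (1 + D)) / n)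
        = ENNReal.ofReal ((1 + D) / n) := by
      rw [← ENNReal.ofReal_one, ← ENNReal.ofReal_sub 1 ha]
      congr 1
      field_simp
      ring
    rw [h1, ← ENNReal.ofReal_inv_of_pos (div_pos h1D hn'), inv_div]
  have G2 : ∑' t : ℕ, ENNReal.ofReal ((n - 1) / n) ^ t = ENNReal.ofReal (n : ℝ) := by
    rw [ENNReal.tsum_geometric]
    have hn1 : (1 : ℝ) ≤ n := by exact_mod_cast hn
    have ha : (0 : ℝ) ≤ (n - 1) / n := div_nonneg (by linarith) hn'.le
    have h1 : (1 : ENNReal) - ENNReal.ofReal ((n - 1) / n) = ENNReal.ofReal (1 / n) := by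
      rw [← ENNReal.ofReal_one, ← ENNReal.ofReal_sub 1 ha]
      congr 1
      field_simp
      ring
    rw [h1, ← ENNReal.ofReal_inv_of_pos (by positivity), one_div, inv_inv]
  -- total mass of the A-part
  have TA : ∑' k, μ {ω | AE p q (fun m => u m ω) k}
      = ENNReal.ofReal ((1 - D) / (1 + D)) := by
    simp only [hmuA]
    rw [ENNReal.tsum_mul_right, G1,
      ← ENNReal.ofReal_mul (div_nonneg hn'.le h1D.le)]
    congr 1
    field_simp
  -- total mass of the B-parts
  have hbj0 : ∀ j : Fin n, (0 : ℝ) ≤ p j - min (p j) (q j) :=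
    fun j => sub_nonneg.2 (min_le_left _ _)
  have hcj0 : ∀ j : Fin n, (0 : ℝ) ≤ q j - min (q j) (p j) :=
    fun j => sub_nonneg.2 (min_le_left _ _)
  have TB : ∑' z : ℕ × Fin n × ℕ, μ {ω | BE p q (fun m => u m ω) z.1 z.2.1 z.2.2}
      = ENNReal.ofReal ((∑ j, (p j - min (p j) (q j)) * q j) / (1 + D)) := by
    have h1 : ∀ (k : ℕ) (j : Fin n) (t : ℕ), μ {ω | BE p q (fun m => u m ω) k j t}
        = (ENNReal.ofReal ((n - (1 + D)) / n) ^ k *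
            (ENNReal.ofReal ((p j - min (p j) (q j)) / n) * ENNReal.ofReal (q j / n)))
          * ENNReal.ofReal ((n - 1) / n) ^ t := by
      intro k j t
      rw [hmuB k j t]
      ring
    rw [ENNReal.tsum_prod']
    have h2 : ∀ k : ℕ, (∑' w : Fin n × ℕ, μ {ω | BE p q (fun m => u m ω) k w.1 w.2})
        = ENNReal.ofReal ((n - (1 + D)) / n) ^ k *
          ((∑ j, ENNReal.ofReal ((p j - min (p j) (q j)) / n) * ENNReal.ofReal (q j / n))
            * ENNReal.ofReal (n : ℝ)) := by
      intro k
      rw [ENNReal.tsum_prod']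
      calc (∑' (j : Fin n), ∑' (t : ℕ), μ {ω | BE p q (fun m => u m ω) k j t})
          = ∑' j : Fin n, (ENNReal.ofReal ((n - (1 + D)) / n) ^ k *
              (ENNReal.ofReal ((p j - min (p j) (q j)) / n) * ENNReal.ofReal (q j / n)))
              * ENNReal.ofReal (n : ℝ) := by
            refine tsum_congr fun j => ?_
            simp only [h1]
            rw [ENNReal.tsum_mul_left, G2]
        _ = _ := by
            rw [tsum_fintype, ← Finset.sum_mul, ← Finset.mul_sum, mul_assoc]
    rw [tsum_congr h2, ENNReal.tsum_mul_right, G1]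
    have h3 : (∑ j, ENNReal.ofReal ((p j - min (p j) (q j)) / n) * ENNReal.ofReal (q j / n))
        = ENNReal.ofReal (∑ j, (p j - min (p j) (q j)) * q j / (n * n)) := by
      rw [ENNReal.ofReal_sum_of_nonneg
        (fun j _ => div_nonneg (mul_nonneg (hbj0 j) (hq0 j)) (by positivity))]
      refine Finset.sum_congr rfl fun j _ => ?_
      rw [← ENNReal.ofReal_mul (div_nonneg (hbj0 j) hn'.le)]
      congr 1
      ring
    have hb0 : (0 : ℝ) ≤ ∑ j, (p j - min (p j) (q j)) * q j / (n * n) :=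
      Finset.sum_nonneg fun j _ => div_nonneg (mul_nonneg (hbj0 j) (hq0 j)) (by positivity)
    rw [h3, ← ENNReal.ofReal_mul hb0, ← ENNReal.ofReal_mul (div_nonneg hn'.le h1D.le)]
    congr 1
    rw [← Finset.sum_div]
    field_simp
  have TB' : ∑' z : ℕ × Fin n × ℕ, μ {ω | BE q p (fun m => u m ω) z.1 z.2.1 z.2.2}
      = ENNReal.ofReal ((∑ j, (q j - min (q j) (p j)) * p j) / (1 + D)) := by
    have h1 : ∀ (k : ℕ) (j : Fin n) (t : ℕ), μ {ω | BE q p (fun m => u m ω) k j t}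
        = (ENNReal.ofReal ((n - (1 + D)) / n) ^ k *
            (ENNReal.ofReal ((q j - min (q j) (p j)) / n) * ENNReal.ofReal (p j / n)))
          * ENNReal.ofReal ((n - 1) / n) ^ t := by
      intro k j t
      rw [hmuB' k j t]
      ring
    rw [ENNReal.tsum_prod']
    have h2 : ∀ k : ℕ, (∑' w : Fin n × ℕ, μ {ω | BE q p (fun m => u m ω) k w.1 w.2})
        = ENNReal.ofReal ((n - (1 + D)) / n) ^ k *
          ((∑ j, ENNReal.ofReal ((q j - min (q j) (p j)) / n) * ENNReal.ofReal (p j / n))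
            * ENNReal.ofReal (n : ℝ)) := by
      intro k
      rw [ENNReal.tsum_prod']
      calc (∑' (j : Fin n), ∑' (t : ℕ), μ {ω | BE q p (fun m => u m ω) k j t})
          = ∑' j : Fin n, (ENNReal.ofReal ((n - (1 + D)) / n) ^ k *
              (ENNReal.ofReal ((q j - min (q j) (p j)) / n) * ENNReal.ofReal (p j / n)))
              * ENNReal.ofReal (n : ℝ) := by
            refine tsum_congr fun j => ?_
            simp only [h1]
            rw [ENNReal.tsum_mul_left, G2]
        _ = _ := by
            rw [tsum_fintype, ← Finset.sum_mul, ← Finset.mul_sum, mul_assoc]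
    rw [tsum_congr h2, ENNReal.tsum_mul_right, G1]
    have h3 : (∑ j, ENNReal.ofReal ((q j - min (q j) (p j)) / n) * ENNReal.ofReal (p j / n))
        = ENNReal.ofReal (∑ j, (q j - min (q j) (p j)) * p j / (n * n)) := by
      rw [ENNReal.ofReal_sum_of_nonneg
        (fun j _ => div_nonneg (mul_nonneg (hcj0 j) (hp0 j)) (by positivity))]
      refine Finset.sum_congr rfl fun j _ => ?_
      rw [← ENNReal.ofReal_mul (div_nonneg (hcj0 j) hn'.le)]
      congr 1
      ring
    have hb0 : (0 : ℝ) ≤ ∑ j, (q j - min (q j) (p j)) * p j / (n * n) :=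
      Finset.sum_nonneg fun j _ => div_nonneg (mul_nonneg (hcj0 j) (hp0 j)) (by positivity)
    rw [h3, ← ENNReal.ofReal_mul hb0, ← ENNReal.ofReal_mul (div_nonneg hn'.le h1D.le)]
    congr 1
    rw [← Finset.sum_div]
    field_simp
  -- assemble
  have hbc : (∑ j, (p j - min (p j) (q j)) * q j) + (∑ j, (q j - min (q j) (p j)) * p j)
      = ∑ i, |p i - q i| * min (p i) (q i) := by
    rw [← Finset.sum_add_distrib]
    refine Finset.sum_congr rfl fun j _ => ?_
    rcases le_total (p j) (q j) with h | h
    · rw [min_eq_left h, min_eq_right h, abs_of_nonpos (by linarith)]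
      ring
    · rw [min_eq_right h, min_eq_left h, abs_of_nonneg (by linarith)]
      ring
  have hSb0 : (0 : ℝ) ≤ ∑ j, (p j - min (p j) (q j)) * q j :=
    Finset.sum_nonneg fun j _ => mul_nonneg (hbj0 j) (hq0 j)
  have hSc0 : (0 : ℝ) ≤ ∑ j, (q j - min (q j) (p j)) * p j :=
    Finset.sum_nonneg fun j _ => mul_nonneg (hcj0 j) (hp0 j)
  have hS0 : (0 : ℝ) ≤ ∑ i, |p i - q i| * min (p i) (q i) := by
    rw [← hbc]; linarith
  have KEY : μ {ω : Ω | ∃ j : Fin n,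
        (∃ k, u k ω ∈ Set.Icc (((j : ℕ) : ℝ)) (((j : ℕ) : ℝ) + p j) ∧
          ∀ m < k, ∀ i : Fin n,
            u m ω ∉ Set.Icc (((i : ℕ) : ℝ)) (((i : ℕ) : ℝ) + p i)) ∧
        (∃ k, u k ω ∈ Set.Icc (((j : ℕ) : ℝ)) (((j : ℕ) : ℝ) + q j) ∧
          ∀ m < k, ∀ i : Fin n,
            u m ω ∉ Set.Icc (((i : ℕ) : ℝ)) (((i : ℕ) : ℝ) + q i))}
      = ENNReal.ofReal ((1 - D + ∑ i, |p i - q i| * min (p i) (q i)) / (1 + D)) := by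
    rw [hT, measure_union hdAB
        (((MeasurableSet.iUnion fun z : ℕ × Fin n × ℕ => hmB z.1 z.2.1 z.2.2).union
          (MeasurableSet.iUnion fun z : ℕ × Fin n × ℕ => hmB' z.1 z.2.1 z.2.2))),
      measure_union hdBB' (MeasurableSet.iUnion fun z : ℕ × Fin n × ℕ => hmB' z.1 z.2.1 z.2.2),
      measure_iUnion hdA hmA,
      measure_iUnion hdB (fun z => hmB z.1 z.2.1 z.2.2),
      measure_iUnion hdB' (fun z => hmB' z.1 z.2.1 z.2.2),
      TA, TB, TB',
      ← ENNReal.ofReal_add (div_nonneg hSb0 h1D.le) (div_nonneg hSc0 h1D.le),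
      ← add_div,
      ← ENNReal.ofReal_add (div_nonneg (by linarith : (0:ℝ) ≤ 1 - D) h1D.le)
        (div_nonneg (by linarith : (0:ℝ) ≤ (∑ j, (p j - min (p j) (q j)) * q j)
          + ∑ j, (q j - min (q j) (p j)) * p j) h1D.le),
      ← add_div]
    congr 2
    linarith
  refine ⟨KEY, ?_⟩
  rw [KEY]
  refine ENNReal.ofReal_le_ofReal ?_
  gcongr
  linarith
end

section
/- Let p and q be probability vectors on {1,…,n}, let u_1, u_2, … be a shared i.i.d. sequence of uniform random variables on [0, n], and let a and b be the Weighted MinHash samples: a is the value j such that u_k ∈ [j−1, j−1+p_j] for the least such k, and b is the value j such that u_k ∈ [j−1, j−1+q_j] for the least such k. Then for every fixed j ∈ {1,…,n}, Pr[a = j and b = j] = min(p_j, q_j)·(1 + |p_j − q_j|) / Σ_{i=1}^n max(p_i, q_i). -/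
open MeasureTheory ProbabilityTheory

lemma icc_inter_null' {a b : ℕ} (hab : a < b) {x y : ℝ} (hx : x ≤ 1) (hy : y ≤ 1) :
    volume (Set.Icc (a:ℝ) (a+x) ∩ Set.Icc (b:ℝ) (b+y)) = 0 := by
  refine measure_mono_null (fun z hz => ?_) (Real.volume_singleton (a := (b:ℝ)))
  have h1 : (a:ℝ) + x ≤ b := by
    have : (a:ℝ) + 1 ≤ b := by exact_mod_cast Nat.succ_le_of_lt hab
    linarith
  have := hz.1.2; have := hz.2.1
  simp only [Set.mem_singleton_iff]; linarith

lemma icc_inter_null {a b : ℕ} (hab : a ≠ b) {x y : ℝ} (hx : x ≤ 1) (hy : y ≤ 1) :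
    volume (Set.Icc (a:ℝ) (a+x) ∩ Set.Icc (b:ℝ) (b+y)) = 0 := by
  rcases Nat.lt_or_ge a b with h | h
  · exact icc_inter_null' h hx hy
  · rw [Set.inter_comm]
    exact icc_inter_null' (lt_of_le_of_ne h (Ne.symm hab)) hy hx

lemma vol_iUnion_icc {n : ℕ} (c : Fin n → ℝ) (h0 : ∀ i, 0 ≤ c i) (h1 : ∀ i, c i ≤ 1) :
    volume (⋃ i : Fin n, Set.Icc (((i:ℕ):ℝ)) (((i:ℕ):ℝ) + c i)) = ENNReal.ofReal (∑ i, c i) := by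
  rw [measure_iUnion₀]
  · rw [tsum_fintype]
    rw [ENNReal.ofReal_sum_of_nonneg (fun i _ => h0 i)]
    refine Finset.sum_congr rfl fun i _ => ?_
    rw [Real.volume_Icc]; ring_nf
  · intro i i' hii'
    exact icc_inter_null (fun h => hii' (Fin.ext (by exact_mod_cast h))) (h1 i) (h1 i')
  · exact fun i => measurableSet_Icc.nullMeasurableSet

lemma icc_subset_icc {n : ℕ} (i : Fin n) {c : ℝ} (hc : c ≤ 1) :
    Set.Icc (((i:ℕ):ℝ)) (((i:ℕ):ℝ) + c) ⊆ Set.Icc 0 (n:ℝ) := by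
  intro x hx
  have hi : ((i:ℕ):ℝ) + 1 ≤ n := by exact_mod_cast Nat.succ_le_of_lt i.2
  have h0 : (0:ℝ) ≤ ((i:ℕ):ℝ) := Nat.cast_nonneg _
  exact ⟨le_trans h0 hx.1, by linarith [hx.2]⟩

lemma union_subset_icc {n : ℕ} (c : Fin n → ℝ) (h1 : ∀ i, c i ≤ 1) :
    (⋃ i : Fin n, Set.Icc (((i:ℕ):ℝ)) (((i:ℕ):ℝ) + c i)) ⊆ Set.Icc 0 (n:ℝ) :=
  Set.iUnion_subset fun i => icc_subset_icc i (h1 i)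

lemma meas_union_icc {n : ℕ} (c : Fin n → ℝ) :
    MeasurableSet (⋃ i : Fin n, Set.Icc (((i:ℕ):ℝ)) (((i:ℕ):ℝ) + c i)) :=
  MeasurableSet.iUnion fun _ => measurableSet_Icc

lemma vol_icc_diff_union {n : ℕ} (c : Fin n → ℝ) (h0 : ∀ i, 0 ≤ c i) (h1 : ∀ i, c i ≤ 1) :
    volume (Set.Icc 0 (n:ℝ) \ ⋃ i : Fin n, Set.Icc (((i:ℕ):ℝ)) (((i:ℕ):ℝ) + c i))
      = ENNReal.ofReal ((n:ℝ) - ∑ i, c i) := by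
  rw [measure_diff (union_subset_icc c h1) (meas_union_icc c).nullMeasurableSet
      (by rw [vol_iUnion_icc c h0 h1]; exact ENNReal.ofReal_ne_top),
    vol_iUnion_icc c h0 h1, Real.volume_Icc, sub_zero,
    ← ENNReal.ofReal_sub _ (Finset.sum_nonneg fun i _ => h0 i)]

lemma vol_inter_union {n : ℕ} (j : Fin n) {x : ℝ} (hx0 : 0 ≤ x) (hx1 : x ≤ 1)
    (c : Fin n → ℝ) (h0 : ∀ i, 0 ≤ c i) (h1 : ∀ i, c i ≤ 1) :
    volume (Set.Icc (((j:ℕ):ℝ)) (((j:ℕ):ℝ) + x) ∩ ⋃ i : Fin n, Set.Icc (((i:ℕ):ℝ)) (((i:ℕ):ℝ) + c i))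
      = ENNReal.ofReal (min x (c j)) := by
  have hj : volume (Set.Icc (((j:ℕ):ℝ)) (((j:ℕ):ℝ) + x) ∩ Set.Icc (((j:ℕ):ℝ)) (((j:ℕ):ℝ) + c j))
      = ENNReal.ofReal (min x (c j)) := by
    rw [Set.Icc_inter_Icc, max_self, Real.volume_Icc]
    rcases le_total x (c j) with h | h <;> simp [min_eq_left, min_eq_right, h]
  refine le_antisymm ?_ ?_
  · rw [Set.inter_iUnion]
    refine le_trans (measure_iUnion_le _) ?_
    rw [tsum_fintype]
    rw [show ENNReal.ofReal (min x (c j)) = ∑ i : Fin n,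
        (if i = j then ENNReal.ofReal (min x (c j)) else 0) by simp]
    refine Finset.sum_le_sum fun i _ => ?_
    by_cases hij : i = j
    · subst hij; rw [if_pos rfl]; exact hj.le
    · simp only [hij, if_neg, if_false]
      rw [icc_inter_null (fun h => hij (Fin.ext (by exact_mod_cast h.symm))) hx1 (h1 i)]
  · rw [← hj]
    exact measure_mono (Set.inter_subset_inter_right _ (Set.subset_iUnion
      (fun i : Fin n => Set.Icc (((i:ℕ):ℝ)) (((i:ℕ):ℝ) + c i)) j))

lemma vol_icc_diff_union' {n : ℕ} (j : Fin n) {x : ℝ} (hx0 : 0 ≤ x) (hx1 : x ≤ 1)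
    (c : Fin n → ℝ) (h0 : ∀ i, 0 ≤ c i) (h1 : ∀ i, c i ≤ 1) :
    volume (Set.Icc (((j:ℕ):ℝ)) (((j:ℕ):ℝ) + x) \ ⋃ i : Fin n, Set.Icc (((i:ℕ):ℝ)) (((i:ℕ):ℝ) + c i))
      = ENNReal.ofReal (x - min x (c j)) := by
  have h := measure_inter_add_diff (μ := volume) (Set.Icc (((j:ℕ):ℝ)) (((j:ℕ):ℝ) + x)) (meas_union_icc c)
  rw [vol_inter_union j hx0 hx1 c h0 h1, Real.volume_Icc, add_sub_cancel_left] at h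
  rw [ENNReal.ofReal_sub _ (le_min hx0 (h0 j))]
  rw [← h, ENNReal.add_sub_cancel_left ENNReal.ofReal_ne_top]


/-- Weighted MinHash coupling, per-index collision probability: for each fixed `j`,
`Pr[a = j and b = j] = min (p j) (q j) * (1 + |p j - q j|) / ∑ i, max (p i) (q i)`. -/
theorem stmt_4 (n : ℕ) (hn : 0 < n) (p q : Fin n → ℝ)
    (hp0 : ∀ i, 0 ≤ p i) (hp1 : ∑ i, p i = 1)
    (hq0 : ∀ i, 0 ≤ q i) (hq1 : ∑ i, q i = 1)
    {Ω : Type*} [MeasurableSpace Ω] (μ : Measure Ω) [IsProbabilityMeasure μ]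
    (u : ℕ → Ω → ℝ) (hmeas : ∀ k, Measurable (u k))
    (hindep : iIndepFun u μ)
    (hunif : ∀ k, Measure.map (u k) μ =
      (ENNReal.ofReal n)⁻¹ • volume.restrict (Set.Icc (0 : ℝ) n))
    (j : Fin n) :
    μ {ω |
        (∃ k, u k ω ∈ Set.Icc (((j : ℕ) : ℝ)) (((j : ℕ) : ℝ) + p j) ∧
          ∀ m < k, ∀ i : Fin n,
            u m ω ∉ Set.Icc (((i : ℕ) : ℝ)) (((i : ℕ) : ℝ) + p i)) ∧
        (∃ k, u k ω ∈ Set.Icc (((j : ℕ) : ℝ)) (((j : ℕ) : ℝ) + q j) ∧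
          ∀ m < k, ∀ i : Fin n,
            u m ω ∉ Set.Icc (((i : ℕ) : ℝ)) (((i : ℕ) : ℝ) + q i))}
      = ENNReal.ofReal
          (min (p j) (q j) * (1 + |p j - q j|) / ∑ i, max (p i) (q i)) := by
  -- basic bounds
  have hp1' : ∀ i, p i ≤ 1 := fun i => hp1 ▸ Finset.single_le_sum (fun i _ => hp0 i) (Finset.mem_univ i)
  have hq1' : ∀ i, q i ≤ 1 := fun i => hq1 ▸ Finset.single_le_sum (fun i _ => hq0 i) (Finset.mem_univ i)
  set S : ℝ := ∑ i, max (p i) (q i) with hS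
  have hmax0 : ∀ i, 0 ≤ max (p i) (q i) := fun i => le_max_of_le_left (hp0 i)
  have hmax1 : ∀ i, max (p i) (q i) ≤ 1 := fun i => max_le (hp1' i) (hq1' i)
  have hS1 : 1 ≤ S := by
    rw [← hp1]; exact Finset.sum_le_sum fun i _ => le_max_left _ _
  have hS0 : 0 < S := lt_of_lt_of_le one_pos hS1
  have hSn : S ≤ n := by
    calc S ≤ ∑ _i : Fin n, (1:ℝ) := Finset.sum_le_sum fun i _ => hmax1 i
    _ = n := by simp
  have hn0 : (0:ℝ) < n := by exact_mod_cast hn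
  -- the interval families
  set A : Fin n → Set ℝ := fun i => Set.Icc (((i:ℕ):ℝ)) (((i:ℕ):ℝ) + p i) with hA
  set B : Fin n → Set ℝ := fun i => Set.Icc (((i:ℕ):ℝ)) (((i:ℕ):ℝ) + q i) with hB
  set Up : Set ℝ := ⋃ i, A i with hUp
  set Uq : Set ℝ := ⋃ i, B i with hUq
  set E : ℕ → ℕ → Set Ω := fun s t =>
    {ω | u s ω ∈ A j ∧ (∀ m < s, u m ω ∉ Up) ∧ u t ω ∈ B j ∧ (∀ m < t, u m ω ∉ Uq)} with hE
  -- rewrite the event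
  have hset : {ω |
        (∃ k, u k ω ∈ Set.Icc (((j : ℕ) : ℝ)) (((j : ℕ) : ℝ) + p j) ∧
          ∀ m < k, ∀ i : Fin n,
            u m ω ∉ Set.Icc (((i : ℕ) : ℝ)) (((i : ℕ) : ℝ) + p i)) ∧
        (∃ k, u k ω ∈ Set.Icc (((j : ℕ) : ℝ)) (((j : ℕ) : ℝ) + q j) ∧
          ∀ m < k, ∀ i : Fin n,
            u m ω ∉ Set.Icc (((i : ℕ) : ℝ)) (((i : ℕ) : ℝ) + q i))}
      = ⋃ s, ⋃ t, E s t := by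
    ext ω
    simp only [hE, hUp, hUq, hA, hB, Set.mem_setOf_eq, Set.mem_iUnion, Set.mem_iUnion,
      Set.mem_iUnion, not_exists]
    constructor
    · rintro ⟨⟨s, hs1, hs2⟩, ⟨t, ht1, ht2⟩⟩
      exact ⟨s, t, hs1, hs2, ht1, ht2⟩
    · rintro ⟨s, t, hs1, hs2, ht1, ht2⟩
      exact ⟨⟨s, hs1, hs2⟩, ⟨t, ht1, ht2⟩⟩
  rw [hset]
  -- per-coordinate measure computation
  have key : ∀ (k : ℕ) (X : Set ℝ), MeasurableSet X →
      μ (u k ⁻¹' X) = (ENNReal.ofReal n)⁻¹ * volume (X ∩ Set.Icc 0 (n:ℝ)) := by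
    intro k X hX
    rw [← Measure.map_apply (hmeas k) hX, hunif k, Measure.smul_apply,
      Measure.restrict_apply hX, smul_eq_mul]
  have keyR : ∀ (k : ℕ) (X : Set ℝ) (v : ℝ), MeasurableSet X →
      volume (X ∩ Set.Icc 0 (n:ℝ)) = ENNReal.ofReal v →
      μ (u k ⁻¹' X) = ENNReal.ofReal (v / n) := by
    intro k X v hX hvol
    rw [key k X hX, hvol, ENNReal.ofReal_div_of_pos hn0, ENNReal.div_eq_inv_mul]
  have hUpm : MeasurableSet Up := meas_union_icc p
  have hUqm : MeasurableSet Uq := meas_union_icc q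
  have hUpq : Up ∪ Uq = ⋃ i : Fin n, Set.Icc (((i:ℕ):ℝ)) (((i:ℕ):ℝ) + max (p i) (q i)) := by
    rw [hUp, hUq, ← Set.iUnion_union_distrib]
    refine Set.iUnion_congr fun i => ?_
    ext x
    simp only [hA, hB, Set.mem_union, Set.mem_Icc, le_max_iff]
    constructor
    · rintro (⟨h1,h2⟩|⟨h1,h2⟩)
      exacts [⟨h1, le_trans h2 (add_le_add_right (le_max_left _ _) _)⟩,
        ⟨h1, le_trans h2 (add_le_add_right (le_max_right _ _) _)⟩]
    · rintro ⟨h1, h2⟩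
      rcases le_total (p i) (q i) with h | h
      · exact Or.inr ⟨h1, by rwa [max_eq_right h] at h2⟩
      · exact Or.inl ⟨h1, by rwa [max_eq_left h] at h2⟩
  have fact_both : ∀ k, μ (u k ⁻¹' (Up ∪ Uq)ᶜ) = ENNReal.ofReal (((n:ℝ) - S)/n) := by
    intro k
    refine keyR k _ _ (hUpm.union hUqm).compl ?_
    rw [Set.inter_comm, ← Set.diff_eq, hUpq, vol_icc_diff_union _ hmax0 hmax1]
  have fact_notq : ∀ k, μ (u k ⁻¹' Uqᶜ) = ENNReal.ofReal (((n:ℝ) - 1)/n) := by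
    intro k
    refine keyR k _ _ hUqm.compl ?_
    rw [Set.inter_comm, ← Set.diff_eq, hUq]
    show volume (Set.Icc 0 (n:ℝ) \ ⋃ i : Fin n, Set.Icc (((i:ℕ):ℝ)) (((i:ℕ):ℝ) + q i)) = _
    rw [vol_icc_diff_union q hq0 hq1', hq1]
  have fact_notp : ∀ k, μ (u k ⁻¹' Upᶜ) = ENNReal.ofReal (((n:ℝ) - 1)/n) := by
    intro k
    refine keyR k _ _ hUpm.compl ?_
    rw [Set.inter_comm, ← Set.diff_eq, hUp]
    show volume (Set.Icc 0 (n:ℝ) \ ⋃ i : Fin n, Set.Icc (((i:ℕ):ℝ)) (((i:ℕ):ℝ) + p i)) = _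
    rw [vol_icc_diff_union p hp0 hp1', hp1]
  have hABj : A j ∩ B j = Set.Icc (((j:ℕ):ℝ)) (((j:ℕ):ℝ) + min (p j) (q j)) := by
    rw [hA, hB, Set.Icc_inter_Icc, max_self]
    congr 1
    rcases le_total (p j) (q j) with h | h <;> simp [min_eq_left, min_eq_right, h]
  have hminle : min (p j) (q j) ≤ 1 := le_trans (min_le_left _ _) (hp1' j)
  have fact_ab : ∀ k, μ (u k ⁻¹' (A j ∩ B j)) = ENNReal.ofReal (min (p j) (q j) / n) := by
    intro k
    refine keyR k _ _ (measurableSet_Icc.inter measurableSet_Icc) ?_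
    rw [hABj, Set.inter_eq_self_of_subset_left (icc_subset_icc j hminle),
      Real.volume_Icc, add_sub_cancel_left]
  have fact_bj : ∀ k, μ (u k ⁻¹' B j) = ENNReal.ofReal (q j / n) := by
    intro k
    refine keyR k _ _ measurableSet_Icc ?_
    rw [show B j = Set.Icc (((j:ℕ):ℝ)) (((j:ℕ):ℝ) + q j) from rfl,
      Set.inter_eq_self_of_subset_left (icc_subset_icc j (hq1' j)),
      Real.volume_Icc, add_sub_cancel_left]
  have fact_aj : ∀ k, μ (u k ⁻¹' A j) = ENNReal.ofReal (p j / n) := by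
    intro k
    refine keyR k _ _ measurableSet_Icc ?_
    rw [show A j = Set.Icc (((j:ℕ):ℝ)) (((j:ℕ):ℝ) + p j) from rfl,
      Set.inter_eq_self_of_subset_left (icc_subset_icc j (hp1' j)),
      Real.volume_Icc, add_sub_cancel_left]
  have fact_adiff : ∀ k, μ (u k ⁻¹' (A j \ Uq)) =
      ENNReal.ofReal ((p j - min (p j) (q j)) / n) := by
    intro k
    refine keyR k _ _ (measurableSet_Icc.diff hUqm) ?_
    rw [Set.inter_eq_self_of_subset_left
      (le_trans Set.diff_subset (icc_subset_icc j (hp1' j) : A j ⊆ _)), hUq]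
    exact vol_icc_diff_union' j (hp0 j) (hp1' j) q hq0 hq1'
  have fact_bdiff : ∀ k, μ (u k ⁻¹' (B j \ Up)) =
      ENNReal.ofReal ((q j - min (p j) (q j)) / n) := by
    intro k
    refine keyR k _ _ (measurableSet_Icc.diff hUpm) ?_
    rw [Set.inter_eq_self_of_subset_left
      (le_trans Set.diff_subset (icc_subset_icc j (hq1' j) : B j ⊆ _)), hUp,
      min_comm]
    exact vol_icc_diff_union' j (hq0 j) (hq1' j) p hp0 hp1'
  set a : ENNReal := ENNReal.ofReal (((n:ℝ) - S)/n) with ha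
  set b : ENNReal := ENNReal.ofReal (((n:ℝ) - 1)/n) with hb
  -- diagonal measure
  have mdiag : ∀ s, μ (E s s) = a^s * ENNReal.ofReal (min (p j) (q j)/n) := by
    intro s
    have hrep : E s s = ⋂ m ∈ Finset.range (s+1),
        u m ⁻¹' (if m = s then A j ∩ B j else (Up ∪ Uq)ᶜ) := by
      ext ω
      simp only [hE, Set.mem_setOf_eq, Set.mem_iInter, Finset.mem_range, Set.mem_preimage]
      constructor
      · rintro ⟨h1, h2, h3, h4⟩ m hm
        by_cases hms : m = s
        · subst hms; simp only [if_pos rfl]; exact ⟨h1, h3⟩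
        · have hlt : m < s := by omega
          simp only [if_neg hms, Set.mem_compl_iff, Set.mem_union]
          rintro (h | h)
          exacts [h2 m hlt h, h4 m hlt h]
      · intro h
        have hs' := h s (by omega)
        simp only [if_pos rfl] at hs'
        refine ⟨hs'.1, fun m hm hmem => ?_, hs'.2, fun m hm hmem => ?_⟩
        · have hh := h m (by omega); rw [if_neg (by omega : ¬ m = s)] at hh
          exact hh (Set.mem_union_left _ hmem)
        · have hh := h m (by omega); rw [if_neg (by omega : ¬ m = s)] at hh
          exact hh (Set.mem_union_right _ hmem)
    rw [hrep, hindep.measure_inter_preimage_eq_mul (Finset.range (s+1)) (fun m _ => by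
      split_ifs
      · exact measurableSet_Icc.inter measurableSet_Icc
      · exact (hUpm.union hUqm).compl)]
    rw [Finset.prod_range_succ, if_pos rfl, fact_ab s]
    congr 1
    have hc : ∀ m ∈ Finset.range s,
        μ (u m ⁻¹' (if m = s then A j ∩ B j else (Up ∪ Uq)ᶜ)) = a := by
      intro m hm
      rw [if_neg (by simp only [Finset.mem_range] at hm; omega), fact_both m]
    rw [Finset.prod_congr rfl hc, Finset.prod_const, Finset.card_range]
  -- upper (s < t) measure
  have mupper : ∀ s r, μ (E s (s+1+r)) =
      (a^s * ENNReal.ofReal ((p j - min (p j) (q j))/n)) *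
        (b^r * ENNReal.ofReal (q j / n)) := by
    intro s r
    have hrep : E s (s+1+r) = ⋂ m ∈ Finset.range (s+1+(r+1)),
        u m ⁻¹' (if m < s then (Up ∪ Uq)ᶜ else if m = s then A j \ Uq
          else if m = s+1+r then B j else Uqᶜ) := by
      ext ω
      simp only [hE, Set.mem_setOf_eq, Set.mem_iInter, Finset.mem_range, Set.mem_preimage]
      constructor
      · rintro ⟨h1, h2, h3, h4⟩ m hm
        split_ifs with hc1 hc2 hc3
        · simp only [Set.mem_compl_iff, Set.mem_union]
          rintro (h | h)
          exacts [h2 m hc1 h, h4 m (by omega) h]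
        · subst hc2; exact ⟨h1, h4 m (by omega)⟩
        · subst hc3; exact h3
        · exact h4 m (by omega)
      · intro h
        refine ⟨?_, fun m hm hmem => ?_, ?_, fun m hm hmem => ?_⟩
        · have hh := h s (by omega)
          rw [if_neg (lt_irrefl s), if_pos rfl] at hh
          exact hh.1
        · have hh := h m (by omega)
          rw [if_pos hm] at hh
          exact hh (Set.mem_union_left _ hmem)
        · have hh := h (s+1+r) (by omega)
          rw [if_neg (by omega), if_neg (by omega), if_pos rfl] at hh
          exact hh
        · have hh := h m (by omega)
          by_cases hc1 : m < s
          · rw [if_pos hc1] at hh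
            exact hh (Set.mem_union_right _ hmem)
          · by_cases hc2 : m = s
            · rw [if_neg hc1, if_pos hc2] at hh
              exact hh.2 hmem
            · rw [if_neg hc1, if_neg hc2, if_neg (by omega)] at hh
              exact hh hmem
    rw [hrep, hindep.measure_inter_preimage_eq_mul (Finset.range (s+1+(r+1))) (fun m _ => by
      split_ifs
      · exact (hUpm.union hUqm).compl
      · exact measurableSet_Icc.diff hUqm
      · exact measurableSet_Icc
      · exact hUqm.compl)]
    rw [Finset.prod_range_add]
    congr 1
    · rw [Finset.prod_range_succ, if_neg (lt_irrefl s), if_pos rfl, fact_adiff s]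
      congr 1
      have hc : ∀ m ∈ Finset.range s,
          μ (u m ⁻¹' (if m < s then (Up ∪ Uq)ᶜ else if m = s then A j \ Uq
            else if m = s+1+r then B j else Uqᶜ)) = a := by
        intro m hm
        rw [if_pos (Finset.mem_range.1 hm), fact_both m]
      rw [Finset.prod_congr rfl hc, Finset.prod_const, Finset.card_range]
    · rw [Finset.prod_range_succ, if_neg (by omega), if_neg (by omega), if_pos rfl, fact_bj]
      congr 1
      have hc : ∀ i ∈ Finset.range r,
          μ (u (s+1+i) ⁻¹' (if s+1+i < s then (Up ∪ Uq)ᶜ else if s+1+i = s then A j \ Uq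
            else if s+1+i = s+1+r then B j else Uqᶜ)) = b := by
        intro i hi
        rw [if_neg (by omega), if_neg (by omega),
          if_neg (by simp only [Finset.mem_range] at hi; omega), fact_notq]
      rw [Finset.prod_congr rfl hc, Finset.prod_const, Finset.card_range]
  -- lower (t < s) measure
  have mlower : ∀ t r, μ (E (t+1+r) t) =
      (a^t * ENNReal.ofReal ((q j - min (p j) (q j))/n)) *
        (b^r * ENNReal.ofReal (p j / n)) := by
    intro t r
    have hrep : E (t+1+r) t = ⋂ m ∈ Finset.range (t+1+(r+1)),
        u m ⁻¹' (if m < t then (Up ∪ Uq)ᶜ else if m = t then B j \ Up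
          else if m = t+1+r then A j else Upᶜ) := by
      ext ω
      simp only [hE, Set.mem_setOf_eq, Set.mem_iInter, Finset.mem_range, Set.mem_preimage]
      constructor
      · rintro ⟨h1, h2, h3, h4⟩ m hm
        split_ifs with hc1 hc2 hc3
        · simp only [Set.mem_compl_iff, Set.mem_union]
          rintro (h | h)
          exacts [h2 m (by omega) h, h4 m hc1 h]
        · subst hc2; exact ⟨h3, h2 m (by omega)⟩
        · subst hc3; exact h1
        · exact h2 m (by omega)
      · intro h
        refine ⟨?_, fun m hm hmem => ?_, ?_, fun m hm hmem => ?_⟩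
        · have hh := h (t+1+r) (by omega)
          rw [if_neg (by omega), if_neg (by omega), if_pos rfl] at hh
          exact hh
        · have hh := h m (by omega)
          by_cases hc1 : m < t
          · rw [if_pos hc1] at hh
            exact hh (Set.mem_union_left _ hmem)
          · by_cases hc2 : m = t
            · rw [if_neg hc1, if_pos hc2] at hh
              exact hh.2 hmem
            · rw [if_neg hc1, if_neg hc2, if_neg (by omega)] at hh
              exact hh hmem
        · have hh := h t (by omega)
          rw [if_neg (lt_irrefl t), if_pos rfl] at hh
          exact hh.1
        · have hh := h m (by omega)
          rw [if_pos hm] at hh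
          exact hh (Set.mem_union_right _ hmem)
    rw [hrep, hindep.measure_inter_preimage_eq_mul (Finset.range (t+1+(r+1))) (fun m _ => by
      split_ifs
      · exact (hUpm.union hUqm).compl
      · exact measurableSet_Icc.diff hUpm
      · exact measurableSet_Icc
      · exact hUpm.compl)]
    rw [Finset.prod_range_add]
    congr 1
    · rw [Finset.prod_range_succ, if_neg (lt_irrefl t), if_pos rfl, fact_bdiff t]
      congr 1
      have hc : ∀ m ∈ Finset.range t,
          μ (u m ⁻¹' (if m < t then (Up ∪ Uq)ᶜ else if m = t then B j \ Up
            else if m = t+1+r then A j else Upᶜ)) = a := by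
        intro m hm
        rw [if_pos (Finset.mem_range.1 hm), fact_both m]
      rw [Finset.prod_congr rfl hc, Finset.prod_const, Finset.card_range]
    · rw [Finset.prod_range_succ, if_neg (by omega), if_neg (by omega), if_pos rfl, fact_aj]
      congr 1
      have hc : ∀ i ∈ Finset.range r,
          μ (u (t+1+i) ⁻¹' (if t+1+i < t then (Up ∪ Uq)ᶜ else if t+1+i = t then B j \ Up
            else if t+1+i = t+1+r then A j else Upᶜ)) = b := by
        intro i hi
        rw [if_neg (by omega), if_neg (by omega),
          if_neg (by simp only [Finset.mem_range] at hi; omega), fact_notp]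
      rw [Finset.prod_congr rfl hc, Finset.prod_const, Finset.card_range]
  -- disjointness
  have hdisj : ∀ s t s' t', s ≠ s' ∨ t ≠ t' → Disjoint (E s t) (E s' t') := by
    intro s t s' t' hne
    rw [Set.disjoint_left]
    rintro ω ⟨h1, h2, h3, h4⟩ ⟨h1', h2', h3', h4'⟩
    have hs : s = s' := by
      by_contra hss
      rcases Nat.lt_or_ge s s' with h | h
      · exact h2' s h (Set.mem_iUnion.2 ⟨j, h1⟩)
      · exact h2 s' (by omega) (Set.mem_iUnion.2 ⟨j, h1'⟩)
    have ht : t = t' := by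
      by_contra htt
      rcases Nat.lt_or_ge t t' with h | h
      · exact h4' t h (Set.mem_iUnion.2 ⟨j, h3⟩)
      · exact h4 t' (by omega) (Set.mem_iUnion.2 ⟨j, h3'⟩)
    tauto
  -- measurability
  have hEm : ∀ s t, MeasurableSet (E s t) := by
    intro s t
    have hrw : E s t = (u s ⁻¹' A j) ∩ ((⋂ m ∈ Finset.range s, u m ⁻¹' Upᶜ) ∩
        ((u t ⁻¹' B j) ∩ ⋂ m ∈ Finset.range t, u m ⁻¹' Uqᶜ)) := by
      ext ω
      simp only [hE, Set.mem_setOf_eq, Set.mem_inter_iff, Set.mem_preimage, Set.mem_iInter,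
        Finset.mem_range, Set.mem_compl_iff]
    rw [hrw]
    exact (hmeas s measurableSet_Icc).inter
      ((MeasurableSet.biInter (Finset.range s).countable_toSet
          (fun m _ => hmeas m hUpm.compl)).inter
        ((hmeas t measurableSet_Icc).inter
          (MeasurableSet.biInter (Finset.range t).countable_toSet
            (fun m _ => hmeas m hUqm.compl))))
  -- decomposition
  have hsplit : (⋃ s, ⋃ t, E s t) =
      (⋃ s, E s s) ∪ ((⋃ x : ℕ × ℕ, E x.1 (x.1+1+x.2)) ∪ (⋃ x : ℕ × ℕ, E (x.2+1+x.1) x.2)) := by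
    ext ω
    simp only [Set.mem_iUnion, Set.mem_union, Prod.exists]
    constructor
    · rintro ⟨s, t, h⟩
      rcases lt_trichotomy s t with hlt | rfl | hgt
      · exact Or.inr (Or.inl ⟨s, t - s - 1, by rw [show s+1+(t-s-1) = t from by omega]; exact h⟩)
      · exact Or.inl ⟨s, h⟩
      · exact Or.inr (Or.inr ⟨s - t - 1, t, by rw [show t+1+(s-t-1) = s from by omega]; exact h⟩)
    · rintro (⟨s, h⟩ | ⟨s, r, h⟩ | ⟨r, t, h⟩)
      exacts [⟨s, s, h⟩, ⟨s, s+1+r, h⟩, ⟨t+1+r, t, h⟩]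
  rw [hsplit,
    measure_union (Set.disjoint_iUnion_left.2 fun s => Set.disjoint_union_right.2
      ⟨Set.disjoint_iUnion_right.2 fun x => hdisj _ _ _ _ (by omega),
       Set.disjoint_iUnion_right.2 fun x => hdisj _ _ _ _ (by omega)⟩)
      ((MeasurableSet.iUnion fun x => hEm _ _).union (MeasurableSet.iUnion fun x => hEm _ _)),
    measure_union (Set.disjoint_iUnion_left.2 fun x => Set.disjoint_iUnion_right.2
        fun y => hdisj _ _ _ _ (by omega))
      (MeasurableSet.iUnion fun x => hEm _ _),
    measure_iUnion (fun s s' hss => hdisj _ _ _ _ (Or.inl hss)) (fun s => hEm s s),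
    measure_iUnion (fun x y hxy => hdisj _ _ _ _ (by
      rcases eq_or_ne x.1 y.1 with h1 | h1
      · exact Or.inr fun h => hxy (Prod.ext h1 (by omega))
      · exact Or.inl h1)) (fun x => hEm _ _),
    measure_iUnion (fun x y hxy => hdisj _ _ _ _ (by
      rcases eq_or_ne x.2 y.2 with h1 | h1
      · exact Or.inl fun h => hxy (Prod.ext (by omega) h1)
      · exact Or.inr h1)) (fun x => hEm _ _)]
  -- geometric sums
  have hdivkey : ∀ x y : ℝ, 0 < x →
      (ENNReal.ofReal x)⁻¹ * ENNReal.ofReal y = ENNReal.ofReal (y / x) := by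
    intro x y hx
    rw [ENNReal.ofReal_div_of_pos hx, ENNReal.div_eq_inv_mul]
  have h1a : (1:ENNReal) - a = ENNReal.ofReal (S/n) := by
    rw [ha, ← ENNReal.ofReal_one,
      ← ENNReal.ofReal_sub _ (div_nonneg (by linarith) hn0.le)]
    congr 1
    field_simp
    ring
  have h1b : (1:ENNReal) - b = ENNReal.ofReal (1/n) := by
    rw [hb, ← ENNReal.ofReal_one,
      ← ENNReal.ofReal_sub _ (div_nonneg (by simp; exact_mod_cast hn) hn0.le)]
    congr 1
    field_simp
    ring
  have hd1 : 0 ≤ p j - min (p j) (q j) := by simp [min_le_left]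
  have hd2 : 0 ≤ q j - min (p j) (q j) := by simp [min_le_right]
  have sum_diag : ∑' s, μ (E s s) = ENNReal.ofReal (min (p j) (q j) / S) := by
    simp only [mdiag]
    rw [ENNReal.tsum_mul_right, ENNReal.tsum_geometric, h1a,
      hdivkey _ _ (div_pos hS0 hn0)]
    congr 1
    field_simp
  have sum_upper : ∑' x : ℕ × ℕ, μ (E x.1 (x.1+1+x.2)) =
      ENNReal.ofReal ((p j - min (p j) (q j)) * q j / S) := by
    rw [ENNReal.tsum_prod']
    simp only [mupper, mul_assoc]
    simp only [ENNReal.tsum_mul_left, ENNReal.tsum_mul_right, ENNReal.tsum_geometric, h1a, h1b]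
    rw [hdivkey _ _ (div_pos one_pos hn0), ← ENNReal.ofReal_mul (div_nonneg hd1 hn0.le),
      hdivkey _ _ (div_pos hS0 hn0)]
    congr 1
    field_simp
  have sum_lower : ∑' x : ℕ × ℕ, μ (E (x.2+1+x.1) x.2) =
      ENNReal.ofReal ((q j - min (p j) (q j)) * p j / S) := by
    rw [ENNReal.tsum_prod']
    simp only [mlower, mul_assoc]
    simp only [ENNReal.tsum_mul_left, ENNReal.tsum_mul_right, ENNReal.tsum_geometric, h1a, h1b]
    rw [hdivkey _ _ (div_pos one_pos hn0), ← ENNReal.ofReal_mul (div_nonneg hd2 hn0.le),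
      hdivkey _ _ (div_pos hS0 hn0)]
    congr 1
    field_simp
  rw [sum_diag, sum_upper, sum_lower,
    ← ENNReal.ofReal_add (div_nonneg (mul_nonneg hd1 (hq0 j)) hS0.le)
      (div_nonneg (mul_nonneg hd2 (hp0 j)) hS0.le),
    ← ENNReal.ofReal_add (div_nonneg (le_min (hp0 j) (hq0 j)) hS0.le)
      (add_nonneg (div_nonneg (mul_nonneg hd1 (hq0 j)) hS0.le)
        (div_nonneg (mul_nonneg hd2 (hp0 j)) hS0.le))]
  congr 1
  rcases le_total (p j) (q j) with h | h
  · rw [min_eq_left h, abs_of_nonpos (by linarith)]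
    field_simp
    ring
  · rw [min_eq_right h, abs_of_nonneg (by linarith)]
    field_simp
    ring
end

section
/- Let d be a positive integer, and for each i ∈ {1,…,d+1} let P_i be the probability vector on {1,…,d+1} that is uniform over {1,…,d+1}\{i}, i.e., P_i assigns probability 1/d to every j ≠ i and probability 0 to i. Let (Ω, F, μ) be any probability space and let x_1, …, x_{d+1} : Ω → {1,…,d+1} be random variables such that x_i is distributed according to P_i for each i. Then there exist indices i ≠ j such that Pr[x_i = x_j] ≤ (1 − 1/d) / (1 + 1/d) = 1 − 2/(d+1). -/
open MeasureTheory ProbabilityTheory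
open scoped ENNReal

lemma sum_aux (d : ℕ) (c : Fin (d+1) → ℕ) (hle : ∀ v, c v ≤ d)
    (hsum : ∑ v, c v = d + 1) :
    ∑ v, c v * (c v - 1) ≤ d * (d - 1) := by
  by_cases h : ∃ v0, c v0 = d
  · obtain ⟨v0, hv0⟩ := h
    have hother : ∀ v, v ≠ v0 → c v ≤ 1 := by
      intro v hv
      have h2 : c v + c v0 ≤ ∑ w, c w := by
        calc c v + c v0 = ∑ w ∈ ({v, v0} : Finset (Fin (d+1))), c w := by
              rw [Finset.sum_pair hv]
          _ ≤ ∑ w, c w := Finset.sum_le_sum_of_subset (Finset.subset_univ _)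
      omega
    calc ∑ v, c v * (c v - 1) ≤ ∑ v, (if v = v0 then d * (d-1) else 0) := by
          apply Finset.sum_le_sum; intro v _
          by_cases hvv : v = v0
          · subst hvv; simp [hv0]
          · have h1 := hother v hvv
            have h2 : c v - 1 = 0 := by omega
            simp [hvv, h2]
      _ = d * (d-1) := by simp
  · push_neg at h
    have hle' : ∀ v, c v ≤ d - 1 := fun v => by
      have h1 := hle v; have h2 := h v; omega
    have h1 : ∀ v, c v * (c v - 1) ≤ c v * (d - 2) := fun v =>
      Nat.mul_le_mul_left _ (by have := hle' v; omega)
    calc ∑ v, c v * (c v - 1) ≤ ∑ v, c v * (d-2) :=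
          Finset.sum_le_sum (fun v _ => h1 v)
      _ = (d+1) * (d-2) := by rw [← Finset.sum_mul, hsum]
      _ ≤ d * (d-1) := by
          rcases d with _ | _ | k
          · simp
          · simp
          · have : k + 1 + 1 - 2 = k := by omega
            have h2 : k + 1 + 1 - 1 = k + 1 := by omega
            rw [this, h2]; nlinarith

lemma comb (d : ℕ) (f : Fin (d+1) → Fin (d+1)) (hf : ∀ i, f i ≠ i) :
    ((Finset.univ : Finset (Fin (d+1))).offDiag.filter
      (fun p => f p.1 = f p.2)).card ≤ d * (d-1) := by
  classical
  set c : Fin (d+1) → ℕ := fun v => (Finset.univ.filter (fun i => f i = v)).card with hc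
  have hsum : ∑ v, c v = d + 1 := by
    have := Finset.card_eq_sum_card_fiberwise
      (f := f) (s := Finset.univ) (t := Finset.univ) (fun x _ => Finset.mem_univ _)
    simp only [Finset.card_univ, Fintype.card_fin] at this
    exact this.symm
  have hle : ∀ v, c v ≤ d := by
    intro v
    have hsub : Finset.univ.filter (fun i => f i = v) ⊆ Finset.univ.erase v := by
      intro i hi
      simp only [Finset.mem_filter, Finset.mem_univ, true_and] at hi
      refine Finset.mem_erase.mpr ⟨?_, Finset.mem_univ _⟩
      intro h; subst h; exact hf i hi
    calc c v ≤ (Finset.univ.erase v).card := Finset.card_le_card hsub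
      _ = d := by
          rw [Finset.card_erase_of_mem (Finset.mem_univ _), Finset.card_univ,
            Fintype.card_fin]
          omega
  have hdecomp : ((Finset.univ : Finset (Fin (d+1))).offDiag.filter
      (fun p => f p.1 = f p.2)).card
      = ∑ v, (((Finset.univ : Finset (Fin (d+1))).offDiag.filter
          (fun p => f p.1 = f p.2)).filter (fun p => f p.1 = v)).card :=
    Finset.card_eq_sum_card_fiberwise (fun p _ => Finset.mem_univ _)
  have hbound : ∀ v, (((Finset.univ : Finset (Fin (d+1))).offDiag.filter
      (fun p => f p.1 = f p.2)).filter (fun p => f p.1 = v)).card ≤ c v * (c v - 1) := by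
    intro v
    have hsub : ((Finset.univ : Finset (Fin (d+1))).offDiag.filter
        (fun p => f p.1 = f p.2)).filter (fun p => f p.1 = v)
        ⊆ (Finset.univ.filter (fun i => f i = v)).offDiag := by
      intro p hp
      simp only [Finset.mem_filter, Finset.mem_offDiag, Finset.mem_univ, true_and] at hp ⊢
      obtain ⟨⟨hne, heq⟩, hv⟩ := hp
      exact ⟨hv, by rw [← heq]; exact hv, hne⟩
    calc (((Finset.univ : Finset (Fin (d+1))).offDiag.filter
        (fun p => f p.1 = f p.2)).filter (fun p => f p.1 = v)).card
        ≤ (Finset.univ.filter (fun i => f i = v)).offDiag.card :=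
          Finset.card_le_card hsub
      _ = c v * c v - c v := by rw [Finset.offDiag_card]
      _ ≤ c v * (c v - 1) := by rw [Nat.mul_sub_one]
  calc ((Finset.univ : Finset (Fin (d+1))).offDiag.filter
      (fun p => f p.1 = f p.2)).card
      = ∑ v, (((Finset.univ : Finset (Fin (d+1))).offDiag.filter
          (fun p => f p.1 = f p.2)).filter (fun p => f p.1 = v)).card := hdecomp
    _ ≤ ∑ v, c v * (c v - 1) := Finset.sum_le_sum (fun v _ => hbound v)
    _ ≤ d * (d-1) := sum_aux d c hle hsum

/-- Worst-case optimality of communication-free coupling: if `x i` is distributed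
according to `P i`, the uniform distribution on `Fin (d+1) \ {i}` (probability `1/d`
on each `j ≠ i` and `0` on `i`), then some pair `i ≠ j` has
`Pr[x i = x j] ≤ (1 - 1/d) / (1 + 1/d)`; moreover
`(1 - 1/d) / (1 + 1/d) = 1 - 2/(d+1)`. -/
theorem stmt_5 (d : ℕ) (hd : 0 < d)
    {Ω : Type*} [MeasurableSpace Ω] (μ : Measure Ω) [IsProbabilityMeasure μ]
    (x : Fin (d + 1) → Ω → Fin (d + 1)) (hmeas : ∀ i, Measurable (x i))
    (hdist : ∀ i j, μ {ω | x i ω = j} =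
      if j = i then 0 else ENNReal.ofReal (1 / (d : ℝ))) :
    (∃ i j, i ≠ j ∧
      μ {ω | x i ω = x j ω} ≤
        ENNReal.ofReal ((1 - 1 / (d : ℝ)) / (1 + 1 / (d : ℝ)))) ∧
    (1 - 1 / (d : ℝ)) / (1 + 1 / (d : ℝ)) = 1 - 2 / ((d : ℝ) + 1) := by
  have hd0 : (d : ℝ) ≠ 0 := Nat.cast_ne_zero.mpr hd.ne'
  have hd1 : (d : ℝ) + 1 ≠ 0 := by positivity
  constructor
  · classical
    set S : Fin (d+1) × Fin (d+1) → Set Ω := fun p => {ω | x p.1 ω = x p.2 ω} with hS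
    have hmS : ∀ p, MeasurableSet (S p) := fun p =>
      measurableSet_eq_fun (hmeas p.1) (hmeas p.2)
    set E : Finset (Fin (d+1) × Fin (d+1)) := (Finset.univ : Finset (Fin (d+1))).offDiag
      with hE
    have hEcard : E.card = (d+1) * d := by
      rw [hE, Finset.offDiag_card, Finset.card_univ, Fintype.card_fin, Nat.mul_succ]
      exact Nat.add_sub_cancel _ _
    -- a.e. bound
    have hA : ∀ᵐ ω ∂μ, ∀ i, x i ω ≠ i := by
      rw [MeasureTheory.ae_all_iff]
      intro i
      rw [MeasureTheory.ae_iff]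
      have h := hdist i i
      rw [if_pos rfl] at h
      convert h using 2
      ext ω; simp
    -- the key sum bound
    have key : ∑ p ∈ E, μ (S p) ≤ ((d * (d-1) : ℕ) : ℝ≥0∞) := by
      calc ∑ p ∈ E, μ (S p)
          = ∑ p ∈ E, ∫⁻ ω, (S p).indicator (fun _ => (1:ℝ≥0∞)) ω ∂μ := by
            refine Finset.sum_congr rfl fun p _ => ?_
            exact (lintegral_indicator_one (hmS p)).symm
        _ = ∫⁻ ω, ∑ p ∈ E, (S p).indicator (fun _ => (1:ℝ≥0∞)) ω ∂μ :=
            (lintegral_finset_sum _ fun p _ => measurable_const.indicator (hmS p)).symm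
        _ ≤ ∫⁻ _, ((d * (d-1) : ℕ) : ℝ≥0∞) ∂μ := by
            apply lintegral_mono_ae
            filter_upwards [hA] with ω hω
            have hcount : ∑ p ∈ E, (S p).indicator (fun _ => (1:ℝ≥0∞)) ω
                = ((E.filter (fun p => x p.1 ω = x p.2 ω)).card : ℝ≥0∞) := by
              rw [← Finset.sum_boole]
              refine Finset.sum_congr rfl fun p _ => ?_
              simp [Set.indicator_apply, hS, Set.mem_setOf_eq]
            rw [hcount]
            have := comb d (fun i => x i ω) hω
            exact_mod_cast this
        _ = ((d * (d-1) : ℕ) : ℝ≥0∞) := by simp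
    -- pick the minimizing pair
    have hEne : E.Nonempty := by
      refine ⟨(⟨0, by omega⟩, ⟨1, by omega⟩), ?_⟩
      rw [hE, Finset.mem_offDiag]
      exact ⟨Finset.mem_univ _, Finset.mem_univ _, by simp [Fin.ext_iff]⟩
    obtain ⟨p0, hp0E, hp0min⟩ := E.exists_min_image (fun p => μ (S p)) hEne
    have hsum_lower : (E.card : ℝ≥0∞) * μ (S p0) ≤ ∑ p ∈ E, μ (S p) := by
      calc (E.card : ℝ≥0∞) * μ (S p0) = ∑ _p ∈ E, μ (S p0) := by
            rw [Finset.sum_const, nsmul_eq_mul]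
        _ ≤ ∑ p ∈ E, μ (S p) := Finset.sum_le_sum hp0min
    have hfin : ((d * (d-1) : ℕ) : ℝ≥0∞)
        = (E.card : ℝ≥0∞) * ENNReal.ofReal ((1 - 1 / (d : ℝ)) / (1 + 1 / (d : ℝ))) := by
      rw [hEcard, ← ENNReal.ofReal_natCast ((d+1)*d), ← ENNReal.ofReal_natCast (d*(d-1)),
        ← ENNReal.ofReal_mul (by positivity)]
      congr 1
      have h1 : (1:ℕ) ≤ d := hd
      push_cast [Nat.cast_sub h1]
      field_simp
    have hcard0 : (E.card : ℝ≥0∞) ≠ 0 := by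
      have h0 : E.card ≠ 0 := by
        rw [hEcard]; exact Nat.mul_ne_zero (by omega) hd.ne'
      exact Nat.cast_ne_zero.mpr h0
    have hcardtop : (E.card : ℝ≥0∞) ≠ ⊤ := ENNReal.natCast_ne_top _
    have hfinal : μ (S p0) ≤ ENNReal.ofReal ((1 - 1 / (d : ℝ)) / (1 + 1 / (d : ℝ))) := by
      have h1 : (E.card : ℝ≥0∞) * μ (S p0)
          ≤ (E.card : ℝ≥0∞) * ENNReal.ofReal ((1 - 1 / (d : ℝ)) / (1 + 1 / (d : ℝ))) := by
        calc (E.card : ℝ≥0∞) * μ (S p0) ≤ ∑ p ∈ E, μ (S p) := hsum_lower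
          _ ≤ ((d * (d-1) : ℕ) : ℝ≥0∞) := key
          _ = _ := hfin
      exact (ENNReal.mul_le_mul_iff_right hcard0 hcardtop).mp h1
    refine ⟨p0.1, p0.2, ?_, hfinal⟩
    rw [hE, Finset.mem_offDiag] at hp0E
    exact hp0E.2.2
  · rw [div_eq_iff (by positivity)]
    field_simp
    ring
end

section
/- Let d be a positive integer and let x_1, …, x_{d+1} ∈ {1,…,d+1} satisfy x_i ≠ i for every i. Then the number of unordered pairs {i, j} with i ≠ j and x_i = x_j is at most C(d+1, 2) − d; equivalently, at least d of the C(d+1, 2) pairwise equalities x_i = x_j fail. -/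
/-!
Since `x` has no fixed point it is not constant (`x (x 0) ≠ x 0`). Split the indices into the
fibre `s` of some value of `x` and its complement: both are nonempty, so with `a + b = d + 1`,
`a, b ≥ 1` there are `a * b ≥ d` pairs with one index in each part, and every such pair is
unequal. The bound on equal pairs is the complementary count among all `C(d+1, 2)` pairs.
-/

open Finset

section

variable {ι β : Type*} [Fintype ι] [LinearOrder ι] [DecidableEq β]

lemma card_mul_card_compl_le_card_pairs_ne (x : ι → β) (s : Finset ι)
    (hs : ∀ i ∈ s, ∀ j ∉ s, x i ≠ x j) :
    #s * #sᶜ ≤ #{ij : ι × ι | ij.1 < ij.2 ∧ x ij.1 ≠ x ij.2} := by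
  rw [← card_product]
  refine card_le_card_of_injOn (fun ij => (min ij.1 ij.2, max ij.1 ij.2)) ?_ ?_
  · rintro ⟨i, j⟩ hij
    simp only [coe_product, Set.mem_prod, mem_coe, mem_compl] at hij
    have hne := hs i hij.1 j hij.2
    have hij' : i ≠ j := fun h => hne (congrArg x h)
    simp only [mem_coe, mem_filter, mem_univ, true_and]
    rcases hij'.lt_or_gt with h | h
    · simp [min_eq_left h.le, max_eq_right h.le, h, hne]
    · simp [min_eq_right h.le, max_eq_left h.le, h, hne.symm]
  · rintro ⟨i, j⟩ hij ⟨k, l⟩ hkl h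
    simp only [coe_product, Set.mem_prod, mem_coe, mem_compl, Prod.mk.injEq] at hij hkl h
    -- the endpoint in `s` is the first component, the other one the second
    grind

lemma card_sub_one_le_card_pairs_ne (x : ι → β) (hx : ∃ i j, x i ≠ x j) :
    Fintype.card ι - 1 ≤ #{ij : ι × ι | ij.1 < ij.2 ∧ x ij.1 ≠ x ij.2} := by
  obtain ⟨i, j, hij⟩ := hx
  set s : Finset ι := {k | x k = x i}
  have hi : i ∈ s := by simp [s]
  have hj : j ∈ sᶜ := by simp [s, hij.symm]
  have hsum : #s + #sᶜ = Fintype.card ι := card_add_card_compl s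
  have hprod : #s + #sᶜ - 1 ≤ #s * #sᶜ := by
    have := card_pos.mpr ⟨i, hi⟩
    have := card_pos.mpr ⟨j, hj⟩
    rw [Nat.sub_le_iff_le_add]
    nlinarith
  refine hsum ▸ hprod.trans (card_mul_card_compl_le_card_pairs_ne x s ?_)
  intro k hk l hl
  simp only [s, mem_filter, mem_univ, true_and] at hk hl
  rwa [hk, ne_comm]

lemma card_pairs_eq_add_card_pairs_ne (x : ι → β) :
    #{ij : ι × ι | ij.1 < ij.2 ∧ x ij.1 = x ij.2} +
      #{ij : ι × ι | ij.1 < ij.2 ∧ x ij.1 ≠ x ij.2} = (Fintype.card ι).choose 2 := by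
  rw [← Fintype.card_product_filter_lt, ← filter_filter, ← filter_filter]
  exact card_filter_add_card_filter_not _

end

theorem stmt_6_general (d : ℕ) (x : Fin (d + 1) → Fin (d + 1))
    (hx : ∀ i, x i ≠ i) :
    (Finset.univ.filter
        (fun ij : Fin (d + 1) × Fin (d + 1) =>
          ij.1 < ij.2 ∧ x ij.1 = x ij.2)).card ≤ (d + 1).choose 2 - d ∧
    d ≤ (Finset.univ.filter
        (fun ij : Fin (d + 1) × Fin (d + 1) =>
          ij.1 < ij.2 ∧ x ij.1 ≠ x ij.2)).card := by
  have hne := card_sub_one_le_card_pairs_ne x ⟨x 0, 0, hx (x 0)⟩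
  have hsplit := card_pairs_eq_add_card_pairs_ne x
  rw [Fintype.card_fin] at hne hsplit
  rw [Nat.add_sub_cancel] at hne
  omega

/-- If `x 1, …, x (d+1) ∈ {1,…,d+1}` satisfy `x i ≠ i` for every `i`, then at most
`C(d+1,2) - d` of the unordered pairs `{i,j}` (with `i ≠ j`) satisfy `x i = x j`;
equivalently, at least `d` of the pairwise equalities fail. -/
theorem stmt_6 (d : ℕ) (hd : 0 < d) (x : Fin (d + 1) → Fin (d + 1))
    (hx : ∀ i, x i ≠ i) :
    (Finset.univ.filter
        (fun ij : Fin (d + 1) × Fin (d + 1) =>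
          ij.1 < ij.2 ∧ x ij.1 = x ij.2)).card ≤ (d + 1).choose 2 - d ∧
    d ≤ (Finset.univ.filter
        (fun ij : Fin (d + 1) × Fin (d + 1) =>
          ij.1 < ij.2 ∧ x ij.1 ≠ x ij.2)).card :=
  stmt_6_general d x hx
end

section
/- Let p be a probability vector on {1,…,n} and let u = (u_1,…,u_n) be independent random variables, each uniformly distributed on [0,1]. Fix j ∈ {1,…,n} with p_j > 0. Then the probability of the event that, for every i ≠ j, p_i·(−ln u_j) < p_j·(−ln u_i) (i.e., j is the strict minimizer of (−ln u_i)/p_i over the support of p) equals p_j. -/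
open MeasureTheory ProbabilityTheory

/-- Gumbel sampling: with `u 1, …, u n` i.i.d. uniform on `[0,1]` and `p j > 0`, the
probability that `p i * (-ln (u j)) < p j * (-ln (u i))` for every `i ≠ j` (i.e. that
`j` is the strict minimizer of `(-ln (u i)) / p i` over the support of `p`) is `p j`. -/
theorem stmt_8 (n : ℕ) (p : Fin n → ℝ)
    (hp0 : ∀ i, 0 ≤ p i) (hp1 : ∑ i, p i = 1)
    {Ω : Type*} [MeasurableSpace Ω] (μ : Measure Ω) [IsProbabilityMeasure μ]
    (u : Fin n → Ω → ℝ) (hmeas : ∀ i, Measurable (u i))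
    (hindep : iIndepFun u μ)
    (hunif : ∀ i, Measure.map (u i) μ = volume.restrict (Set.Icc (0 : ℝ) 1))
    (j : Fin n) (hj : 0 < p j) :
    μ {ω | ∀ i, i ≠ j →
        p i * (-Real.log (u j ω)) < p j * (-Real.log (u i ω))}
      = ENNReal.ofReal (p j) := by
  classical
  set ν : Measure ℝ := volume.restrict (Set.Icc (0:ℝ) 1) with hν
  -- the joint law is the product of uniforms
  set U : Ω → (Fin n → ℝ) := fun ω i => u i ω with hU
  have hUmeas : Measurable U := measurable_pi_lambda _ fun i => hmeas i
  have hmap : Measure.map U μ = Measure.pi (fun _ : Fin n => ν) := by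
    refine (Measure.pi_eq fun s hs => ?_).symm
    rw [Measure.map_apply hUmeas (MeasurableSet.univ_pi hs)]
    have hpre : U ⁻¹' Set.pi Set.univ s = ⋂ i, u i ⁻¹' (s i) := by
      ext ω; simp [hU, Set.mem_pi]
    rw [hpre, hindep.meas_iInter (fun i => ⟨s i, hs i, rfl⟩)]
    refine Finset.prod_congr rfl fun i _ => ?_
    rw [← hunif i, Measure.map_apply (hmeas i) (hs i)]
  -- the event as a preimage
  set S : Set (Fin n → ℝ) :=
    {x | ∀ i, i ≠ j → p i * (-Real.log (x j)) < p j * (-Real.log (x i))} with hS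
  have hSmeas : MeasurableSet S := by
    have : S = ⋂ i, ⋂ (_ : i ≠ j),
        {x : Fin n → ℝ | p i * (-Real.log (x j)) < p j * (-Real.log (x i))} := by
      ext x; simp [hS]
    rw [this]
    refine MeasurableSet.iInter fun i => MeasurableSet.iInter fun _ => ?_
    exact measurableSet_lt
      ((measurable_const.mul ((Real.measurable_log.comp (measurable_pi_apply j)).neg)))
      ((measurable_const.mul ((Real.measurable_log.comp (measurable_pi_apply i)).neg)))
  have hμS : μ {ω | ∀ i, i ≠ j →
        p i * (-Real.log (u j ω)) < p j * (-Real.log (u i ω))}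
      = Measure.pi (fun _ : Fin n => ν) S := by
    rw [← hmap, Measure.map_apply hUmeas hSmeas]; rfl
  rw [hμS]
  -- split off coordinate j
  haveI : IsProbabilityMeasure ν := ⟨by simp [hν, Real.volume_Icc]⟩
  haveI hUniq : Unique {i : Fin n // i = j} :=
    ⟨⟨⟨j, rfl⟩⟩, fun a => Subtype.ext a.2⟩
  set e := MeasurableEquiv.piEquivPiSubtypeProd (fun _ : Fin n => ℝ) (· = j) with he
  have hmp := measurePreserving_piEquivPiSubtypeProd (fun _ : Fin n => ν) (· = j)
  have hsymm := hmp.symm e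
  have hTmeas : MeasurableSet (e.symm ⁻¹' S) := e.symm.measurable hSmeas
  have hkey : (Measure.pi fun _ : Fin n => ν) S
      = ∫⁻ a, (Measure.pi fun _ : {i : Fin n // ¬ i = j} => ν)
          (Prod.mk a ⁻¹' (e.symm ⁻¹' S)) ∂(Measure.pi fun _ : {i : Fin n // i = j} => ν) := by
    rw [← Measure.prod_apply hTmeas]
    convert (hsymm.measure_preimage_equiv S).symm using 3 <;> congr!
  rw [hkey]
  -- compute the slices
  have hslice : ∀ a : {i : Fin n // i = j} → ℝ,
      Prod.mk a ⁻¹' (e.symm ⁻¹' S)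
        = Set.pi Set.univ (fun i : {i : Fin n // ¬ i = j} =>
            {x : ℝ | p i * (-Real.log (a default)) < p j * (-Real.log x)}) := by
    intro a
    have hj' : ∀ b : {i : Fin n // ¬ i = j} → ℝ, e.symm (a, b) j = a default := by
      intro b
      show (Equiv.piEquivPiSubtypeProd (· = j) (fun _ : Fin n => ℝ)).symm (a, b) j = a default
      rw [Equiv.piEquivPiSubtypeProd_symm_apply]
      rw [dif_pos rfl]
      exact congrArg a (Subsingleton.elim _ _)
    have hi' : ∀ (b : {i : Fin n // ¬ i = j} → ℝ) (i : Fin n) (hi : ¬ i = j),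
        e.symm (a, b) i = b ⟨i, hi⟩ := by
      intro b i hi
      show (Equiv.piEquivPiSubtypeProd (· = j) (fun _ : Fin n => ℝ)).symm (a, b) i = b ⟨i, hi⟩
      rw [Equiv.piEquivPiSubtypeProd_symm_apply, dif_neg hi]
    ext b
    simp only [Set.mem_preimage, hS, Set.mem_setOf_eq, Set.mem_pi, Set.mem_univ,
      forall_true_left]
    constructor
    · intro h i
      have := h i.1 i.2
      rwa [hj' b, hi' b i.1 i.2] at this
    · intro h i hi
      rw [hj' b, hi' b i hi]
      exact h ⟨i, hi⟩
  have hpij_nonneg : ∀ i, 0 ≤ p i / p j := fun i => div_nonneg (hp0 i) hj.le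
  -- value of each factor
  have hfac : ∀ (t : ℝ), t ∈ Set.Ioo (0:ℝ) 1 → ∀ i : Fin n,
      ν {x : ℝ | p i * (-Real.log t) < p j * (-Real.log x)}
        = ENNReal.ofReal (t ^ (p i / p j)) := by
    intro t ht i
    have hlogt : Real.log t < 0 := Real.log_neg ht.1 ht.2
    have hr0 : 0 < t ^ (p i / p j) := Real.rpow_pos_of_pos ht.1 _
    have hr1 : t ^ (p i / p j) ≤ 1 :=
      Real.rpow_le_one ht.1.le ht.2.le (hpij_nonneg i)
    have hset : {x : ℝ | p i * (-Real.log t) < p j * (-Real.log x)} ∩ Set.Icc 0 1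
        = Set.Ioo 0 (t ^ (p i / p j)) := by
      ext x
      simp only [Set.mem_inter_iff, Set.mem_setOf_eq, Set.mem_Icc, Set.mem_Ioo]
      constructor
      · rintro ⟨hlt, hx0, hx1⟩
        have hx0' : 0 < x := by
          rcases hx0.lt_or_eq with h | h
          · exact h
          · exfalso
            rw [← h, Real.log_zero, neg_zero, mul_zero] at hlt
            have : 0 ≤ p i * (-Real.log t) :=
              mul_nonneg (hp0 i) (by linarith)
            linarith
        refine ⟨hx0', ?_⟩
        rw [← Real.exp_log hx0', ← Real.exp_log hr0, Real.exp_lt_exp,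
          Real.log_rpow ht.1]
        have h1 : p i / p j * (-Real.log t) < -Real.log x := by
          rw [div_mul_eq_mul_div, div_lt_iff₀ hj] at *
          · linarith [hlt]
        nlinarith
      · rintro ⟨hx0, hxr⟩
        have hx1 : x ≤ 1 := le_of_lt (lt_of_lt_of_le hxr hr1)
        refine ⟨?_, hx0.le, hx1⟩
        have hlog : Real.log x < Real.log (t ^ (p i / p j)) :=
          Real.log_lt_log hx0 hxr
        rw [Real.log_rpow ht.1] at hlog
        have h2 : p i / p j * (-Real.log t) < -Real.log x := by nlinarith
        rw [div_mul_eq_mul_div, div_lt_iff₀ hj] at h2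
        linarith
    have hmeasset : MeasurableSet {x : ℝ | p i * (-Real.log t) < p j * (-Real.log x)} :=
      measurableSet_lt measurable_const
        (measurable_const.mul Real.measurable_log.neg)
    rw [hν, Measure.restrict_apply hmeasset, hset, Real.volume_Ioo, sub_zero]
  -- the inner slice measure, as a function of t ∈ (0,1)
  set A : ℝ := (1 - p j) / p j with hA
  have hAsum : ∑ i : {i : Fin n // ¬ i = j}, p i / p j = A := by
    rw [← Finset.sum_div]
    congr 1
    have := Finset.sum_erase_add Finset.univ p (Finset.mem_univ j)
    rw [Finset.sum_subtype (p := fun i : Fin n => ¬ i = j) (Finset.univ.erase j)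
      (by intro x; simp [Finset.mem_erase]) p] at this
    linarith [hp1 ▸ this]
  have hA0 : 0 ≤ A := by
    have hpj1 : p j ≤ 1 := hp1 ▸ Finset.single_le_sum (fun i _ => hp0 i) (Finset.mem_univ j)
    exact div_nonneg (by linarith) hj.le
  have hprodF : ∀ t : ℝ, t ∈ Set.Ioo (0:ℝ) 1 →
      (∏ i : {i : Fin n // ¬ i = j},
        ν {x : ℝ | p i * (-Real.log t) < p j * (-Real.log x)})
      = ENNReal.ofReal (t ^ A) := by
    intro t ht
    have : (∏ i : {i : Fin n // ¬ i = j},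
        ν {x : ℝ | p i * (-Real.log t) < p j * (-Real.log x)})
        = ∏ i : {i : Fin n // ¬ i = j}, ENNReal.ofReal (t ^ (p i / p j)) :=
      Finset.prod_congr rfl fun i _ => hfac t ht i
    rw [this, ← ENNReal.ofReal_prod_of_nonneg
      (fun i _ => (Real.rpow_pos_of_pos ht.1 _).le)]
    congr 1
    rw [← hAsum]
    exact (Real.rpow_sum_of_pos ht.1 _ _).symm
  -- rewrite the integrand via the slices
  have hint1 : ∫⁻ a, (Measure.pi fun _ : {i : Fin n // ¬ i = j} => ν)
        (Prod.mk a ⁻¹' (e.symm ⁻¹' S)) ∂(Measure.pi fun _ : {i : Fin n // i = j} => ν)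
      = ∫⁻ a, (∏ i : {i : Fin n // ¬ i = j},
          ν {x : ℝ | p i * (-Real.log (a default)) < p j * (-Real.log x)})
        ∂(Measure.pi fun _ : {i : Fin n // i = j} => ν) := by
    refine lintegral_congr fun a => ?_
    rw [hslice a, Measure.pi_pi]
  rw [hint1]
  set F : ℝ → ENNReal := fun t => ∏ i : {i : Fin n // ¬ i = j},
      ν {x : ℝ | p i * (-Real.log t) < p j * (-Real.log x)} with hF
  have hcomp : ∫⁻ a, F ((MeasurableEquiv.funUnique {i : Fin n // i = j} ℝ) a)
        ∂(Measure.pi fun _ : {i : Fin n // i = j} => ν) = ∫⁻ t, F t ∂ν := by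
    convert (measurePreserving_funUnique ν {i : Fin n // i = j}).lintegral_comp_emb
      (MeasurableEquiv.measurableEmbedding _) F using 2
    congr!
  have hcomp' : ∫⁻ a, F (a default)
        ∂(Measure.pi fun _ : {i : Fin n // i = j} => ν) = ∫⁻ t, F t ∂ν := hcomp
  rw [hcomp']
  -- restrict to the open interval
  have hνIoo : ν = volume.restrict (Set.Ioo (0:ℝ) 1) := by
    rw [hν]
    exact (Measure.restrict_congr_set Ioo_ae_eq_Icc).symm
  rw [hνIoo, setLIntegral_congr_fun measurableSet_Ioo
    (fun t ht => hprodF t ht)]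
  -- final computation
  have hii : IntervalIntegrable (fun t : ℝ => t ^ A) volume 0 1 :=
    intervalIntegral.intervalIntegrable_rpow' (by linarith)
  have hio : IntegrableOn (fun t : ℝ => t ^ A) (Set.Ioo (0:ℝ) 1) volume :=
    ((intervalIntegrable_iff_integrableOn_Ioc_of_le zero_le_one).mp hii).mono_set
      Set.Ioo_subset_Ioc_self
  rw [← ofReal_integral_eq_lintegral_ofReal hio
    ((ae_restrict_iff' measurableSet_Ioo).2
      (ae_of_all _ fun t ht => Real.rpow_nonneg ht.1.le _))]
  congr 1
  rw [← integral_Ioc_eq_integral_Ioo, ← intervalIntegral.integral_of_le zero_le_one,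
    integral_rpow (Or.inl (by linarith))]
  rw [Real.one_rpow, Real.zero_rpow (by linarith), sub_zero, hA]
  field_simp
  ring
end

section
/- Let p and q be probability vectors on {1,…,n} and let u = (u_1,…,u_n) be independent random variables, each uniformly distributed on [0,1]. Fix j ∈ {1,…,n} with p_j > 0 and q_j > 0. Then the probability of the event that, for every i ≠ j, both p_i·(−ln u_j) < p_j·(−ln u_i) and q_i·(−ln u_j) < q_j·(−ln u_i) (i.e., j simultaneously minimizes (−ln u_i)/p_i and (−ln u_i)/q_i) equals 1 / Σ_{i=1}^n max(p_i/p_j, q_i/q_j). -/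
open MeasureTheory ProbabilityTheory

lemma gumbel_key_iff {pi pj qi qj t s : ℝ} (hpj : 0 < pj) (hqj : 0 < qj)
    (ht : t ∈ Set.Ioo (0:ℝ) 1) (hs : s ∈ Set.Ioo (0:ℝ) 1) :
    (pi * (-Real.log t) < pj * (-Real.log s) ∧ qi * (-Real.log t) < qj * (-Real.log s)) ↔
      s < t ^ (max (pi/pj) (qi/qj)) := by
  have hlt : 0 < -Real.log t := by
    have := Real.log_neg ht.1 ht.2; linarith
  have htm : 0 < t ^ (max (pi/pj) (qi/qj)) := Real.rpow_pos_of_pos ht.1 _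
  rw [← Real.log_lt_log_iff hs.1 htm, Real.log_rpow ht.1]
  have h1 : ∀ a : ℝ, (a * (-Real.log t) < pj * (-Real.log s)) ↔
      (a / pj) * (-Real.log t) < -Real.log s := by
    intro a
    rw [div_mul_eq_mul_div, div_lt_iff₀ hpj, mul_comm (-Real.log s) pj]
  have h2 : ∀ a : ℝ, (a * (-Real.log t) < qj * (-Real.log s)) ↔
      (a / qj) * (-Real.log t) < -Real.log s := by
    intro a
    rw [div_mul_eq_mul_div, div_lt_iff₀ hqj, mul_comm (-Real.log s) qj]
  rw [h1, h2, ← max_lt_iff, ← max_mul_of_nonneg _ _ hlt.le]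
  constructor <;> intro h <;> nlinarith [h]

lemma gumbel_law (n : ℕ) {Ω : Type*} [MeasurableSpace Ω] (μ : Measure Ω) [IsProbabilityMeasure μ]
    (u : Fin n → Ω → ℝ) (hmeas : ∀ i, Measurable (u i))
    (hindep : iIndepFun u μ)
    (hunif : ∀ i, Measure.map (u i) μ = volume.restrict (Set.Icc (0 : ℝ) 1)) :
    Measure.map (fun ω i => u i ω) μ
      = Measure.pi (fun _ : Fin n => volume.restrict (Set.Icc (0 : ℝ) 1)) := by
  set ν : Measure ℝ := volume.restrict (Set.Icc (0:ℝ) 1) with hν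
  haveI hνp : IsProbabilityMeasure ν := ⟨by simp [hν, Real.volume_Icc]⟩
  refine (Measure.pi_eq fun s hs => ?_).symm
  rw [Measure.map_apply (measurable_pi_lambda _ hmeas) (MeasurableSet.univ_pi hs)]
  have hpre : (fun ω i => u i ω) ⁻¹' Set.pi Set.univ s = ⋂ i ∈ Finset.univ, u i ⁻¹' s i := by
    ext ω; simp [Set.mem_pi]
  rw [hpre, hindep.measure_inter_preimage_eq_mul Finset.univ (fun i _ => hs i)]
  refine Finset.prod_congr rfl fun i _ => ?_
  rw [← hunif i, Measure.map_apply (hmeas i) (hs i)]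

lemma gumbel_measurableSet (n : ℕ) (c : Fin n → ℝ) (j : Fin n) :
    MeasurableSet {x : Fin n → ℝ | ∀ i, i ≠ j → x i < x j ^ c i} := by
  have h : {x : Fin n → ℝ | ∀ i, i ≠ j → x i < x j ^ c i}
      = ⋂ i, ⋂ (_ : i ≠ j), {x : Fin n → ℝ | x i < x j ^ c i} := by
    ext x; simp
  rw [h]
  refine MeasurableSet.iInter fun i => MeasurableSet.iInter fun hij => ?_
  exact measurableSet_lt (measurable_pi_apply i) (by fun_prop)

lemma gumbel_pi_measure (n : ℕ) (c : Fin n → ℝ) (hc0 : ∀ i, 0 ≤ c i) (j : Fin n) (hcj : c j = 1) :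
    Measure.pi (fun _ : Fin n => volume.restrict (Set.Icc (0 : ℝ) 1))
      {x : Fin n → ℝ | ∀ i, i ≠ j → x i < x j ^ c i}
      = ENNReal.ofReal (1 / ∑ i, c i) := by
  classical
  set ν : Measure ℝ := volume.restrict (Set.Icc (0:ℝ) 1) with hν
  haveI hνp : IsProbabilityMeasure ν := ⟨by simp [hν, Real.volume_Icc]⟩
  set S : ℝ := ∑ i, c i with hS
  have hS1 : 1 ≤ S := by
    rw [hS, ← hcj]
    exact Finset.single_le_sum (fun i _ => hc0 i) (Finset.mem_univ j)
  have hSpos : 0 < S := lt_of_lt_of_le one_pos hS1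
  set SS : Set (Fin n → ℝ) := {x : Fin n → ℝ | ∀ i, i ≠ j → x i < x j ^ c i} with hSS
  have hSSm : MeasurableSet SS := by
    have : SS = ⋂ i, ⋂ (_ : i ≠ j), {x : Fin n → ℝ | x i < x j ^ c i} := by
      ext x; simp [hSS]
    rw [this]
    refine MeasurableSet.iInter fun i => MeasurableSet.iInter fun hij => ?_
    exact measurableSet_lt (measurable_pi_apply i) (by fun_prop)
  set e := MeasurableEquiv.piEquivPiSubtypeProd (fun _ : Fin n => ℝ) (fun i => i = j) with he
  have hmp := measurePreserving_piEquivPiSubtypeProd (fun _ : Fin n => ν) (fun i => i = j)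
  rw [← he] at hmp
  set T : Set (({i : Fin n // i = j} → ℝ) × ({i : Fin n // ¬ i = j} → ℝ)) :=
    e.symm ⁻¹' SS with hT
  have hTm : MeasurableSet T := e.symm.measurable hSSm
  have hST : SS = e ⁻¹' T := by
    rw [hT, ← Set.preimage_comp]
    ext x; simp
  rw [hST, ← Measure.map_apply e.measurable hTm, hmp.map_eq, Measure.prod_apply hTm]
  -- sections are boxes
  have hsec : ∀ x : {i : Fin n // i = j} → ℝ,
      Prod.mk x ⁻¹' T = Set.pi Set.univ
        (fun i : {i : Fin n // ¬ i = j} => Set.Iio ((x ⟨j, rfl⟩) ^ c i.1)) := by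
    intro x
    ext y
    simp only [hT, Set.mem_preimage, Set.mem_setOf_eq, hSS, Set.mem_pi, Set.mem_univ,
      Set.mem_Iio, forall_true_left, he]
    constructor
    · intro h i
      have h2 := h i.1 i.2
      simpa [i.2] using h2
    · intro h i hij
      simpa [hij] using h ⟨i, hij⟩
  simp only [hsec, Measure.pi_pi]
  -- reduce to one dimensional integral
  haveI : Unique {i : Fin n // i = j} := Unique.subtypeEq j
  set g : ℝ → ENNReal := fun t => ∏ i : {i : Fin n // ¬ i = j}, ν (Set.Iio (t ^ c i.1)) with hg
  have hgm : Measurable g := by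
    refine Finset.measurable_prod _ fun i _ => ?_
    have h1 : Measurable fun t : ℝ => t ^ c i.1 := by fun_prop
    have h2 : Measurable fun s : ℝ => ν (Set.Iio s) := by
      refine Monotone.measurable fun a b hab => ?_
      exact measure_mono (Set.Iio_subset_Iio hab)
    exact h2.comp h1
  have hdef : (⟨j, rfl⟩ : {i : Fin n // i = j}) = default := Subsingleton.elim _ _
  trans (∫⁻ t, g t ∂ν)
  · rw [← (measurePreserving_funUnique ν {i : Fin n // i = j}).lintegral_comp hgm]
    simp only [hg, MeasurableEquiv.funUnique_apply, hdef]
    congr!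
  have hsum : ∑ i : {i : Fin n // ¬ i = j}, c i.1 = S - 1 := by
    have h2 : ∑ i ∈ Finset.univ.erase j, c i = S - 1 := by
      have h3 := Finset.add_sum_erase Finset.univ c (Finset.mem_univ j)
      rw [← hS] at h3
      rw [hcj] at h3
      linarith
    rw [← h2]
    exact (Finset.sum_subtype (Finset.univ.erase j) (by simp) c).symm
  have hIoo : ∫⁻ t, g t ∂ν = ∫⁻ t in Set.Ioo (0:ℝ) 1, g t ∂volume := by
    rw [hν, ← Measure.restrict_congr_set Ioo_ae_eq_Icc]
  rw [hIoo]
  have hcongr : ∀ t ∈ Set.Ioo (0:ℝ) 1, g t = ENNReal.ofReal (t ^ (S - 1)) := by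
    intro t ht
    have h1 : ∀ i : {i : Fin n // ¬ i = j},
        ν (Set.Iio (t ^ c i.1)) = ENNReal.ofReal (t ^ c i.1) := by
      intro i
      have hle : t ^ c i.1 ≤ 1 := Real.rpow_le_one ht.1.le ht.2.le (hc0 i.1)
      rw [hν, Measure.restrict_apply measurableSet_Iio]
      have hiico : Set.Iio (t ^ c i.1) ∩ Set.Icc 0 1 = Set.Ico 0 (t ^ c i.1) := by
        ext z
        simp only [Set.mem_inter_iff, Set.mem_Iio, Set.mem_Icc, Set.mem_Ico]
        constructor
        · rintro ⟨hz1, hz2, _⟩; exact ⟨hz2, hz1⟩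
        · rintro ⟨hz1, hz2⟩; exact ⟨hz2, hz1, le_trans hz2.le hle⟩
      rw [hiico, Real.volume_Ico, sub_zero]
    rw [hg]
    simp only []
    rw [Finset.prod_congr rfl fun i _ => h1 i,
      ← ENNReal.ofReal_prod_of_nonneg (fun i _ => (Real.rpow_pos_of_pos ht.1 _).le),
      ← Real.rpow_sum_of_pos ht.1, hsum]
  rw [setLIntegral_congr_fun measurableSet_Ioo hcongr]
  have hint : IntegrableOn (fun t : ℝ => t ^ (S - 1)) (Set.Ioo (0:ℝ) 1) := by
    have h4 := intervalIntegral.intervalIntegrable_rpow' (a := (0:ℝ)) (b := 1) (by linarith : (-1:ℝ) < S - 1)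
    exact ((intervalIntegrable_iff_integrableOn_Ioc_of_le zero_le_one).mp h4).mono_set
      Set.Ioo_subset_Ioc_self
  have hnn : 0 ≤ᵐ[volume.restrict (Set.Ioo (0:ℝ) 1)] fun t : ℝ => t ^ (S - 1) := by
    filter_upwards [ae_restrict_mem measurableSet_Ioo] with t ht
    exact Real.rpow_nonneg ht.1.le _
  rw [← ofReal_integral_eq_lintegral_ofReal hint hnn]
  congr 1
  rw [← integral_Ioc_eq_integral_Ioo, ← intervalIntegral.integral_of_le zero_le_one,
    integral_rpow (Or.inl (by linarith : (-1:ℝ) < S - 1))]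
  have h5 : S - 1 + 1 = S := by ring
  rw [h5, Real.one_rpow, Real.zero_rpow hSpos.ne']
  norm_num

/-- Per-index collision probability of the Gumbel coupling: with shared i.i.d. uniforms
`u 1, …, u n` on `[0,1]` and `p j > 0`, `q j > 0`, the probability that `j`
simultaneously strictly minimizes `(-ln (u i)) / p i` and `(-ln (u i)) / q i`
equals `1 / ∑ i, max (p i / p j) (q i / q j)`. -/
theorem stmt_9 (n : ℕ) (p q : Fin n → ℝ)
    (hp0 : ∀ i, 0 ≤ p i) (hp1 : ∑ i, p i = 1)
    (hq0 : ∀ i, 0 ≤ q i) (hq1 : ∑ i, q i = 1)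
    {Ω : Type*} [MeasurableSpace Ω] (μ : Measure Ω) [IsProbabilityMeasure μ]
    (u : Fin n → Ω → ℝ) (hmeas : ∀ i, Measurable (u i))
    (hindep : iIndepFun u μ)
    (hunif : ∀ i, Measure.map (u i) μ = volume.restrict (Set.Icc (0 : ℝ) 1))
    (j : Fin n) (hpj : 0 < p j) (hqj : 0 < q j) :
    μ {ω | ∀ i, i ≠ j →
        p i * (-Real.log (u j ω)) < p j * (-Real.log (u i ω)) ∧
        q i * (-Real.log (u j ω)) < q j * (-Real.log (u i ω))}
      = ENNReal.ofReal (1 / ∑ i, max (p i / p j) (q i / q j)) := by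
  classical
  set c : Fin n → ℝ := fun i => max (p i / p j) (q i / q j) with hc
  have hc0 : ∀ i, 0 ≤ c i := fun i => le_max_of_le_left (div_nonneg (hp0 i) hpj.le)
  have hcj : c j = 1 := by simp [hc, div_self hpj.ne', div_self hqj.ne']
  have hIoo : ∀ᵐ ω ∂μ, ∀ i, u i ω ∈ Set.Ioo (0:ℝ) 1 := by
    rw [MeasureTheory.ae_all_iff]
    intro i
    refine ae_iff.2 ?_
    have hpre : {ω | ¬ u i ω ∈ Set.Ioo (0:ℝ) 1} = u i ⁻¹' (Set.Ioo (0:ℝ) 1)ᶜ := rfl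
    rw [hpre, ← Measure.map_apply (hmeas i) measurableSet_Ioo.compl, hunif i,
      Measure.restrict_apply measurableSet_Ioo.compl]
    have hsub : (Set.Ioo (0:ℝ) 1)ᶜ ∩ Set.Icc 0 1 ⊆ {0, 1} := by
      rintro z ⟨hz1, hz2, hz3⟩
      simp only [Set.mem_compl_iff, Set.mem_Ioo, not_and_or, not_lt] at hz1
      rcases hz1 with h | h
      · have hz0 : z = 0 := le_antisymm h hz2
        simp [hz0]
      · have hz1' : z = 1 := le_antisymm hz3 h
        simp [hz1']
    refine measure_mono_null hsub ?_
    have : ({0, 1} : Set ℝ).Finite := (Set.finite_singleton 1).insert 0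
    exact this.measure_zero _
  have hAE : {ω | ∀ i, i ≠ j →
        p i * (-Real.log (u j ω)) < p j * (-Real.log (u i ω)) ∧
        q i * (-Real.log (u j ω)) < q j * (-Real.log (u i ω))}
      =ᵐ[μ] {ω | ∀ i, i ≠ j → u i ω < (u j ω) ^ c i} := by
    rw [Filter.eventuallyEq_set]
    filter_upwards [hIoo] with ω hω

    exact forall_congr' fun i => imp_congr_right fun hij =>
      gumbel_key_iff hpj hqj (hω j) (hω i)
  rw [measure_congr hAE]
  have hpre2 : {ω | ∀ i, i ≠ j → u i ω < (u j ω) ^ c i}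
      = (fun ω i => u i ω) ⁻¹' {x : Fin n → ℝ | ∀ i, i ≠ j → x i < x j ^ c i} := rfl
  rw [hpre2, ← Measure.map_apply (measurable_pi_lambda _ hmeas) (gumbel_measurableSet n c j),
    gumbel_law n μ u hmeas hindep hunif, gumbel_pi_measure n c hc0 j hcj]
end

section
/- Let p and q be probability vectors on {1,…,n}, let j ∈ {1,…,n} with p_j > 0, and let k ≥ 1 be a real number such that q_j = k·p_j. Then Σ_{i=1}^n [ max(p_i, q_i) − (1 + (k−1)·p_j) · max(p_i, q_i/k) ] ≥ 0. -/
/-!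
Write `m i = max (p i) (q i / k)` and `M = ∑ i, m i ≥ 1`. Termwise
`k * m i - (k - 1) * p i ≤ max (p i) (q i)`, with slack `(k - 1) * p j` at `i = j`, so
`∑ i, max (p i) (q i) ≥ k * M - (k - 1) * (1 - p j)`. The claimed inequality then reduces to
`(k - 1) * (M - 1) * (1 - p j) ≥ 0`.
-/

open Finset

theorem Finset.sum_add_sub_le_sum {ι M : Type*} [AddCommGroup M] [PartialOrder M]
    [IsOrderedAddMonoid M] {s : Finset ι} {f g : ι → M} (h : ∀ i ∈ s, f i ≤ g i) {j : ι}
    (hj : j ∈ s) : ∑ i ∈ s, f i + (g j - f j) ≤ ∑ i ∈ s, g i := by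
  have hgap : g j - f j ≤ ∑ i ∈ s, (g i - f i) :=
    single_le_sum (f := fun i => g i - f i) (fun i hi => sub_nonneg.2 (h i hi)) hj
  rw [sum_sub_distrib] at hgap
  rw [← le_sub_iff_add_le']
  exact hgap

theorem mul_max_div_sub_le_max {k p q : ℝ} (hk : 1 ≤ k) (hp : 0 ≤ p) :
    k * max p (q / k) - (k - 1) * p ≤ max p q := by
  have hk0 : 0 < k := by linarith
  rcases le_total (q / k) p with h | h
  · rw [max_eq_left h]
    linarith [le_max_left p q]
  · rw [max_eq_right h, mul_div_cancel₀ q hk0.ne']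
    linarith [le_max_right p q, mul_nonneg (sub_nonneg.2 hk) hp]

theorem stmt_12_general (n : ℕ) (p q : Fin n → ℝ)
    (hp0 : ∀ i, 0 ≤ p i) (hp1 : ∑ i, p i = 1)
    (j : Fin n)
    (k : ℝ) (hk : 1 ≤ k) (hqj : q j = k * p j) :
    0 ≤ ∑ i, (max (p i) (q i) - (1 + (k - 1) * p j) * max (p i) (q i / k)) := by
  set M := ∑ i, max (p i) (q i / k)
  have hM : 1 ≤ M := hp1 ▸ sum_le_sum fun i _ => le_max_left (p i) (q i / k)
  have hpj : p j ≤ 1 := hp1 ▸ single_le_sum (fun i _ => hp0 i) (mem_univ j)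
  have hmaxj : max (p j) (q j) = k * p j := by
    rw [hqj]; exact max_eq_right (le_mul_of_one_le_left (hp0 j) hk)
  have hmj : max (p j) (q j / k) = p j := by
    rw [hqj, mul_div_cancel_left₀ _ (by linarith : k ≠ 0), max_self]
  have hmax : k * M - (k - 1) + (k - 1) * p j ≤ ∑ i, max (p i) (q i) := by
    have htermwise := sum_add_sub_le_sum (fun i _ => mul_max_div_sub_le_max (q := q i) hk (hp0 i))
      (mem_univ j)
    rw [sum_sub_distrib, ← mul_sum, ← mul_sum, hp1, hmaxj, hmj] at htermwise
    linarith
  rw [sum_sub_distrib, ← mul_sum]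
  linarith [mul_nonneg (mul_nonneg (sub_nonneg.2 hk) (sub_nonneg.2 hM)) (sub_nonneg.2 hpj)]

/-- Main technical inequality in the proof that Gumbel coupling dominates Weighted
MinHash: if `p j > 0` and `q j = k * p j` with `k ≥ 1`, then
`∑ i, (max (p i) (q i) - (1 + (k - 1) * p j) * max (p i) (q i / k)) ≥ 0`. -/
theorem stmt_12 (n : ℕ) (p q : Fin n → ℝ)
    (hp0 : ∀ i, 0 ≤ p i) (hp1 : ∑ i, p i = 1)
    (hq0 : ∀ i, 0 ≤ q i) (hq1 : ∑ i, q i = 1)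
    (j : Fin n) (hpj : 0 < p j)
    (k : ℝ) (hk : 1 ≤ k) (hqj : q j = k * p j) :
    0 ≤ ∑ i, (max (p i) (q i) - (1 + (k - 1) * p j) * max (p i) (q i / k)) :=
  stmt_12_general n p q hp0 hp1 j k hk hqj
end

section
/- Let p and q be probability vectors on {1,…,n}. Then Σ_{j : p_j > 0 and q_j > 0} 1/(Σ_{i=1}^n max(p_i/p_j, q_i/q_j)) ≥ (1 − D_TV(p,q) + Σ_{i=1}^n |p_i − q_i|·min(p_i, q_i)) / (1 + D_TV(p,q)) ≥ (1 − D_TV(p,q)) / (1 + D_TV(p,q)). That is, the collision probability of the Gumbel coupling is at least that of Weighted MinHash, which in turn is at least the worst-case bound (1 − D_TV)/(1 + D_TV). -/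
private lemma max_eq' (a b : ℝ) : max a b = (a + b + |a - b|) / 2 := by
  rcases le_total a b with h | h
  · rw [max_eq_right h, abs_of_nonpos (by linarith)]; ring
  · rw [max_eq_left h, abs_of_nonneg (by linarith)]; ring

private lemma min_eq' (a b : ℝ) : min a b = (a + b - |a - b|) / 2 := by
  rcases le_total a b with h | h
  · rw [min_eq_left h, abs_of_nonpos (by linarith)]; ring
  · rw [min_eq_right h, abs_of_nonneg (by linarith)]; ring

private lemma pos_part_eq (a b : ℝ) : max (b - a) 0 = (b - a + |a - b|) / 2 := by
  rcases le_total a b with h | h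
  · rw [max_eq_left (by linarith), abs_of_nonpos (by linarith)]; ring
  · rw [max_eq_right (by linarith), abs_of_nonneg (by linarith)]; ring

private lemma aux_key (n : ℕ) (p q : Fin n → ℝ)
    (hp0 : ∀ i, 0 ≤ p i) (hp1 : ∑ i, p i = 1)
    (hq0 : ∀ i, 0 ≤ q i) (hq1 : ∑ i, q i = 1)
    (D : ℝ) (hD : D = (1 / 2) * ∑ i, |p i - q i|)
    (j : Fin n) (hpj : 0 < p j) (hqj : 0 < q j) (hle : p j ≤ q j) :
    min (p j) (q j) * (1 + |p j - q j|) / (1 + D) ≤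
      1 / ∑ i, max (p i / p j) (q i / q j) := by
  set t := q j - p j with ht
  have ht0 : 0 ≤ t := by simp only [ht]; linarith
  have hM1 : q j ≤ 1 := by
    rw [← hq1]
    exact Finset.single_le_sum (fun i _ => hq0 i) (Finset.mem_univ j)
  have hD0 : 0 ≤ D := by rw [hD]; positivity
  set s : Fin n → ℝ := fun i => min (max (q i - p i) 0) (q i * t / q j) with hs
  have hs0 : ∀ i, 0 ≤ s i := fun i => le_min (le_max_right _ _)
    (by have := hq0 i; positivity)
  have hsle : ∀ i, s i ≤ max (q i - p i) 0 := fun i => min_le_left _ _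
  have htq : t / q j ≤ 1 := by
    rw [div_le_one hqj]; simp only [ht]; linarith [hp0 j]
  have hslb : ∀ i, max (q i - p i) 0 * (t / q j) ≤ s i := by
    intro i
    have h2 : max (q i - p i) 0 ≤ q i := max_le (by linarith [hp0 i]) (hq0 i)
    refine le_min ?_ ?_
    · calc max (q i - p i) 0 * (t / q j) ≤ max (q i - p i) 0 * 1 :=
            mul_le_mul_of_nonneg_left htq (le_max_right _ _)
        _ = _ := mul_one _
    · rw [mul_div_assoc]
      exact mul_le_mul_of_nonneg_right h2 (by positivity)
  have hsj : s j = t := by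
    simp only [hs]
    rw [max_eq_left ht0, mul_comm, mul_div_assoc, div_self hqj.ne', mul_one, min_self]
  -- key identity A
  have hA : ∀ i, p j * max (p i / p j) (q i / q j) = max (p i) (q i) - s i := by
    intro i
    have e1 : p j * (p i / p j) = p i := by field_simp
    have e2 : p j * (q i / q j) = q i * p j / q j := by ring
    have h1 : p j * max (p i / p j) (q i / q j) = max (p i) (q i * p j / q j) := by
      rw [mul_max_of_nonneg _ _ hpj.le, e1, e2]
    have hqipj : q i * p j / q j = q i - q i * t / q j := by
      field_simp; ring
    rw [h1]
    rcases le_total (p i) (q i * p j / q j) with h | h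
    · have hb : q i * t / q j ≤ q i - p i := by rw [hqipj] at h; linarith
      have hnn : 0 ≤ q i * t / q j := by have := hq0 i; positivity
      have hpi_le : p i ≤ q i := by rw [hqipj] at h; linarith
      have hsi : s i = q i * t / q j :=
        min_eq_right (le_trans hb (le_max_left _ _))
      rw [max_eq_right h, max_eq_right hpi_le, hsi, hqipj]
    · rw [max_eq_left h]
      rcases le_total (q i) (p i) with h' | h'
      · have hsi : s i = 0 := by
          have : max (q i - p i) 0 = 0 := max_eq_right (by linarith)
          simp only [hs, this]
          exact min_eq_left (by have := hq0 i; positivity)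
        rw [max_eq_left h', hsi, sub_zero]
      · have hb : q i - p i ≤ q i * t / q j := by rw [hqipj] at h; linarith
        have hsi : s i = q i - p i := by
          simp only [hs]
          rw [max_eq_left (by linarith)]
          exact min_eq_left hb
        rw [max_eq_right h', hsi]; ring
  have hsum_max : ∑ i, max (p i) (q i) = 1 + D := by
    calc ∑ i, max (p i) (q i) = ∑ i, (p i + q i + |p i - q i|) / 2 := by
          exact Finset.sum_congr rfl fun i _ => max_eq' _ _
      _ = (∑ i, (p i + q i + |p i - q i|)) / 2 := by rw [Finset.sum_div]
      _ = 1 + D := by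
          rw [Finset.sum_add_distrib, Finset.sum_add_distrib, hp1, hq1, hD]; ring
  have hsum_pp : ∑ i, max (q i - p i) 0 = D := by
    calc ∑ i, max (q i - p i) 0 = ∑ i, (q i - p i + |p i - q i|) / 2 := by
          exact Finset.sum_congr rfl fun i _ => pos_part_eq _ _
      _ = (∑ i, (q i - p i + |p i - q i|)) / 2 := by rw [Finset.sum_div]
      _ = D := by
          rw [Finset.sum_add_distrib, Finset.sum_sub_distrib, hp1, hq1, hD]; ring
  set S := ∑ i, s i with hSdef
  have hSD : S ≤ D := by
    rw [← hsum_pp]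
    exact Finset.sum_le_sum fun i _ => hsle i
  have hS_erase : S = t + ∑ i ∈ Finset.univ.erase j, s i := by
    rw [hSdef, ← Finset.add_sum_erase _ s (Finset.mem_univ j), hsj]
  have hSt : t ≤ S := by
    rw [hS_erase]
    have : 0 ≤ ∑ i ∈ Finset.univ.erase j, s i :=
      Finset.sum_nonneg fun i _ => hs0 i
    linarith
  have hkey : t * (1 + D) ≤ (1 + t) * S := by
    rcases le_total D t with h | h
    · nlinarith [hSt, ht0, hD0]
    · -- D ≥ t : use S ≥ t + (D - t) * t
      have h2 : ∑ i ∈ Finset.univ.erase j, max (q i - p i) 0 = D - t := by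
        have h3 := Finset.add_sum_erase Finset.univ (fun i => max (q i - p i) 0)
          (Finset.mem_univ j)
        rw [hsum_pp] at h3
        have h4 : max (q j - p j) 0 = t := max_eq_left ht0
        simp only [h4] at h3
        linarith
      have h5 : ∑ i ∈ Finset.univ.erase j, max (q i - p i) 0 * (t / q j) ≤
          ∑ i ∈ Finset.univ.erase j, s i :=
        Finset.sum_le_sum fun i _ => hslb i
      rw [← Finset.sum_mul, h2] at h5
      have h6 : t ≤ t / q j := by
        rw [le_div_iff₀ hqj]
        nlinarith
      have h7 : (D - t) * t ≤ (D - t) * (t / q j) :=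
        mul_le_mul_of_nonneg_left h6 (by linarith)
      have h8 : t + (D - t) * t ≤ S := by
        rw [hS_erase]
        exact add_le_add_right (le_trans h7 h5) t
      nlinarith [ht0, hD0]
  have hsum_eq : ∑ i, max (p i / p j) (q i / q j) = (1 + D - S) / p j := by
    have h1 : p j * ∑ i, max (p i / p j) (q i / q j) = 1 + D - S := by
      rw [Finset.mul_sum]
      calc ∑ i, p j * max (p i / p j) (q i / q j)
          = ∑ i, (max (p i) (q i) - s i) := Finset.sum_congr rfl fun i _ => hA i
        _ = 1 + D - S := by rw [Finset.sum_sub_distrib, hsum_max]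
    rw [eq_div_iff hpj.ne']
    linarith [h1, mul_comm (p j) (∑ i, max (p i / p j) (q i / q j))]
  have hpos : 0 < 1 + D - S := by linarith
  have habs : |p j - q j| = t := by
    rw [abs_sub_comm, ← ht]
    exact abs_of_nonneg ht0
  rw [hsum_eq, one_div_div, min_eq_left hle, habs,
    div_le_div_iff₀ (by linarith) hpos]
  nlinarith [mul_le_mul_of_nonneg_left hkey hpj.le]

private lemma aux_key' (n : ℕ) (p q : Fin n → ℝ)
    (hp0 : ∀ i, 0 ≤ p i) (hp1 : ∑ i, p i = 1)
    (hq0 : ∀ i, 0 ≤ q i) (hq1 : ∑ i, q i = 1)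
    (D : ℝ) (hD : D = (1 / 2) * ∑ i, |p i - q i|)
    (j : Fin n) (hpj : 0 < p j) (hqj : 0 < q j) :
    min (p j) (q j) * (1 + |p j - q j|) / (1 + D) ≤
      1 / ∑ i, max (p i / p j) (q i / q j) := by
  rcases le_total (p j) (q j) with h | h
  · exact aux_key n p q hp0 hp1 hq0 hq1 D hD j hpj hqj h
  · have hD' : D = (1 / 2) * ∑ i, |q i - p i| := by
      rw [hD]
      congr 1
      exact Finset.sum_congr rfl fun i _ => abs_sub_comm _ _
    have := aux_key n q p hq0 hq1 hp0 hp1 D hD' j hqj hpj h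
    have e1 : min (q j) (p j) = min (p j) (q j) := min_comm _ _
    have e2 : |q j - p j| = |p j - q j| := abs_sub_comm _ _
    have e3 : ∑ i, max (q i / q j) (p i / p j) = ∑ i, max (p i / p j) (q i / q j) :=
      Finset.sum_congr rfl fun i _ => max_comm _ _
    rw [e1, e2, e3] at this
    exact this

/-- The collision probability of the Gumbel coupling is at least that of Weighted
MinHash, which in turn is at least the worst-case bound `(1 - D_TV)/(1 + D_TV)`. -/
theorem stmt_13 (n : ℕ) (p q : Fin n → ℝ)
    (hp0 : ∀ i, 0 ≤ p i) (hp1 : ∑ i, p i = 1)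
    (hq0 : ∀ i, 0 ≤ q i) (hq1 : ∑ i, q i = 1)
    (D : ℝ) (hD : D = (1 / 2) * ∑ i, |p i - q i|) :
    ((1 - D + ∑ i, |p i - q i| * min (p i) (q i)) / (1 + D) ≤
      ∑ j ∈ Finset.univ.filter (fun j : Fin n => 0 < p j ∧ 0 < q j),
        1 / ∑ i, max (p i / p j) (q i / q j)) ∧
    ((1 - D) / (1 + D) ≤
      (1 - D + ∑ i, |p i - q i| * min (p i) (q i)) / (1 + D)) := by
  have hD0 : 0 ≤ D := by rw [hD]; positivity
  have h1mD : ∑ i, min (p i) (q i) = 1 - D := by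
    calc ∑ i, min (p i) (q i) = ∑ i, (p i + q i - |p i - q i|) / 2 :=
          Finset.sum_congr rfl fun i _ => min_eq' _ _
      _ = (∑ i, (p i + q i - |p i - q i|)) / 2 := by rw [Finset.sum_div]
      _ = 1 - D := by
          rw [Finset.sum_sub_distrib, Finset.sum_add_distrib, hp1, hq1, hD]; ring
  have hnum : (1 - D + ∑ i, |p i - q i| * min (p i) (q i))
      = ∑ i, min (p i) (q i) * (1 + |p i - q i|) := by
    have he : ∀ i ∈ Finset.univ, min (p i) (q i) * (1 + |p i - q i|)
        = min (p i) (q i) + |p i - q i| * min (p i) (q i) := fun i _ => by ring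
    rw [Finset.sum_congr rfl he, Finset.sum_add_distrib, h1mD]
  constructor
  · rw [hnum, Finset.sum_div]
    have hfil : ∑ j ∈ Finset.univ.filter (fun j : Fin n => 0 < p j ∧ 0 < q j),
        min (p j) (q j) * (1 + |p j - q j|) / (1 + D)
        = ∑ j, min (p j) (q j) * (1 + |p j - q j|) / (1 + D) := by
      apply Finset.sum_filter_of_ne
      intro j _ hne
      by_contra hc
      apply hne
      have hmin0 : min (p j) (q j) = 0 := by
        rcases not_and_or.1 hc with h' | h'
        · have : p j = 0 := le_antisymm (not_lt.1 h') (hp0 j)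
          rw [min_eq_left (by rw [this]; exact hq0 j), this]
        · have : q j = 0 := le_antisymm (not_lt.1 h') (hq0 j)
          rw [min_eq_right (by rw [this]; exact hp0 j), this]
      rw [hmin0, zero_mul, zero_div]
    rw [← hfil]
    apply Finset.sum_le_sum
    intro j hj
    have hj' := Finset.mem_filter.1 hj
    exact aux_key' n p q hp0 hp1 hq0 hq1 D hD j hj'.2.1 hj'.2.2
  · have hX : 0 ≤ ∑ i, |p i - q i| * min (p i) (q i) :=
      Finset.sum_nonneg fun i _ => mul_nonneg (abs_nonneg _) (le_min (hp0 i) (hq0 i))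
    have hc : (0:ℝ) < 1 + D := by linarith
    exact div_le_div_of_nonneg_right (by linarith) hc.le
end

section
/- Let p = (p_1, p_2) and q = (q_1, q_2) be probability vectors on {1, 2} with all four entries strictly positive. Then 1/(1 + max(p_1/p_2, q_1/q_2)) + 1/(1 + max(p_2/p_1, q_2/q_1)) = 1 − D_TV(p, q). That is, on two-element supports the Gumbel coupling achieves the optimal collision probability 1 − D_TV(p, q). -/
/-!
The map `x ↦ 1 / (1 + x)` is antitone on `x > -1`, so `1 / (1 + max(a, b)) = min (1 / (1 + a)) (1 / (1 + b))`,
and for a probability vector `1 / (1 + p₁ / p₂) = p₂`. Hence the left-hand side is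
`min p₁ q₁ + min p₂ q₂`, and `min x y = (x + y - |x - y|) / 2` turns this into `1 - D_TV(p, q)`.
-/

lemma one_div_one_add_div_of_add_eq_one {a b : ℝ} (hb : b ≠ 0) (hab : a + b = 1) :
    1 / (1 + a / b) = b := by
  rw [one_add_div hb, add_comm, hab, one_div_one_div]

lemma one_div_one_add_max {a b : ℝ} (ha : -1 < a) (hb : -1 < b) :
    1 / (1 + max a b) = min (1 / (1 + a)) (1 / (1 + b)) := by
  have hanti : AntitoneOn (fun x : ℝ => 1 / (1 + x)) (Set.Ioi (-1)) := fun x hx y _ hxy =>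
    one_div_le_one_div_of_le (by linarith [Set.mem_Ioi.mp hx]) (by linarith)
  exact hanti.map_max ha hb

lemma one_div_one_add_max_div_eq_min {p₁ p₂ q₁ q₂ : ℝ} (hp₂ : 0 < p₂) (hq₂ : 0 < q₂)
    (hp : p₁ + p₂ = 1) (hq : q₁ + q₂ = 1) :
    1 / (1 + max (p₁ / p₂) (q₁ / q₂)) = min p₂ q₂ := by
  have gt_neg_one {a b : ℝ} (hb : 0 < b) (hab : a + b = 1) : -1 < a / b := by
    rw [lt_div_iff₀ hb]; linarith
  rw [one_div_one_add_max (gt_neg_one hp₂ hp) (gt_neg_one hq₂ hq),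
    one_div_one_add_div_of_add_eq_one hp₂.ne' hp, one_div_one_add_div_of_add_eq_one hq₂.ne' hq]

/-- On two-element supports with all entries strictly positive, the Gumbel coupling
achieves the optimal collision probability `1 - D_TV(p,q)`. -/
theorem stmt_14 (p₁ p₂ q₁ q₂ : ℝ)
    (hp₁ : 0 < p₁) (hp₂ : 0 < p₂) (hq₁ : 0 < q₁) (hq₂ : 0 < q₂)
    (hp : p₁ + p₂ = 1) (hq : q₁ + q₂ = 1) :
    1 / (1 + max (p₁ / p₂) (q₁ / q₂)) + 1 / (1 + max (p₂ / p₁) (q₂ / q₁))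
      = 1 - (1 / 2) * (|p₁ - q₁| + |p₂ - q₂|) := by
  rw [one_div_one_add_max_div_eq_min hp₂ hq₂ hp hq,
    one_div_one_add_max_div_eq_min hp₁ hq₁ (by linarith) (by linarith),
    inf_eq_half_smul_add_sub_abs_sub' ℝ,
    inf_eq_half_smul_add_sub_abs_sub' ℝ, abs_sub_comm q₂, abs_sub_comm q₁, smul_eq_mul, smul_eq_mul]
  linarith
end
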